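/- arXiv:2001.04160 — 10 statements merged into one kernel-verified Lean document; each statement's English description precedes it below -/
import Mathlib

section
/- Fix ν ≥ 1. For every m ≥ 0, if s_ν divides s_m, then ν divides m. -/
theorem stmt_2 (k0 k1 k : ℤ) (hk0 : 0 < k0) (hk1 : 0 < k1)
    (hk0sf : Squarefree k0) (hk : k = k0 * k1 ^ 2)
    (s : ℕ → ℤ) (hs0 : s 0 = 0) (hs1 : s 1 = 2 * k1)
    (hsrec : ∀ ν, s (ν + 2) = (4 * k + 2) * s (ν + 1) - s ν)
    (ν : ℕ) (hν : 1 ≤ ν) :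
    ∀ m : ℕ, s ν ∣ s m → ν ∣ m := by
  have hkpos : 0 < k := by rw [hk]; positivity
  set a : ℕ := k.toNat * 2 + 1 with ha
  have ha1 : 1 < a := by
    have : 1 ≤ k.toNat := by omega
    omega
  have hacast : (a : ℤ) = 2 * k + 1 := by
    have : ((k.toNat : ℤ)) = k := Int.toNat_of_nonneg hkpos.le
    push_cast [ha]; omega
  have key : ∀ n, s n = 2 * k1 * (Pell.yn ha1 n : ℤ) := by
    intro n
    induction n using Nat.strong_induction_on with
    | _ n ih =>
      match n with
      | 0 => simp [hs0]
      | 1 => simp [hs1]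
      | (n + 2) =>
        have e := Pell.yn_succ_succ ha1 n
        have e' : (Pell.yn ha1 (n+2) : ℤ) = 2 * (2*k+1) * Pell.yn ha1 (n+1) - Pell.yn ha1 n := by
          have := congrArg (fun x : ℕ => (x : ℤ)) e
          push_cast [hacast] at this
          linarith
        rw [hsrec n, ih (n+1) (by omega), ih n (by omega), e']
        ring
  intro m hdvd
  rw [key, key] at hdvd
  have h2k1 : (2 * k1 : ℤ) ≠ 0 := by positivity
  have : (Pell.yn ha1 ν : ℤ) ∣ (Pell.yn ha1 m : ℤ) :=
    (mul_dvd_mul_iff_left h2k1).mp hdvd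
  exact (Pell.y_dvd_iff ha1 ν m).mp (Int.ofNat_dvd.mp this)
end

section
/- Let k ≥ 3, ν ≥ 1 and l ≥ 2 be integers. Then s_{lν}^4 > 2^{4l}·k0^l·s_ν^{4l} (equivalently, s_{lν} > 2^l·k0^{l/4}·s_ν^l). -/
set_option maxHeartbeats 1000000 in
theorem stmt_3 (k0 k1 k : ℤ) (hk0 : 0 < k0) (hk1 : 0 < k1)
    (hk0sf : Squarefree k0) (hk : k = k0 * k1 ^ 2) (hk3 : 3 ≤ k)
    (s : ℕ → ℤ) (hs0 : s 0 = 0) (hs1 : s 1 = 2 * k1)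
    (hsrec : ∀ ν, s (ν + 2) = (4 * k + 2) * s (ν + 1) - s ν)
    (ν : ℕ) (hν : 1 ≤ ν) (l : ℕ) (hl : 2 ≤ l) :
    2 ^ (4 * l) * k0 ^ l * (s ν) ^ (4 * l) < (s (l * ν)) ^ 4 := by
  have hmono : ∀ n, 0 ≤ s n ∧ s n < s (n + 1) := by
    intro n
    induction n with
    | zero => exact ⟨le_of_eq hs0.symm, by rw [hs0, hs1]; linarith⟩
    | succ m ih =>
      obtain ⟨h0, h1⟩ := ih
      refine ⟨by linarith, ?_⟩
      rw [hsrec m]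
      nlinarith
  have hspos : ∀ n, 1 ≤ n → 0 < s n := by
    intro n hn
    obtain ⟨m, rfl⟩ : ∃ m, n = m + 1 := ⟨n - 1, by omega⟩
    have h := hmono m
    linarith [h.1, h.2]
  have hwpos : ∀ n, 0 < 2 * s (n + 1) - (4 * k + 2) * s n := by
    intro n
    cases n with
    | zero => rw [hs0, hs1]; linarith
    | succ m =>
      rw [hsrec m]
      have h := hmono m
      have h1 := hmono (m + 1)
      nlinarith [h.1, h.2, h1.1, h1.2]
  have hinv : ∀ n, s (n+1)^2 - (4*k+2) * s (n+1) * s n + s n ^ 2 = 4 * k1^2 := by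
    intro n
    induction n with
    | zero => rw [hs0, hs1]; ring
    | succ m ih => rw [hsrec m]; linear_combination ih
  have hwsq : ∀ n, (2 * s (n+1) - (4*k+2) * s n)^2
      = 16*k*(k+1) * s n ^ 2 + 16 * k1^2 := by
    intro n; linear_combination 4 * hinv n
  have uniq : ∀ f g : ℕ → ℤ, f 0 = g 0 → f 1 = g 1 →
      (∀ n, f (n+2) = (4*k+2) * f (n+1) - f n) →
      (∀ n, g (n+2) = (4*k+2) * g (n+1) - g n) → ∀ n, f n = g n := by
    intro f g h0 h1 hf hg n
    induction n using Nat.twoStepInduction with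
    | zero => exact h0
    | one => exact h1
    | more p ih1 ih2 => rw [hf p, hg p, ih1, ih2]
  have hadd : ∀ m n, 4 * k1 * s (m + n)
      = s m * (2 * s (n+1) - (4*k+2) * s n) + (2 * s (m+1) - (4*k+2) * s m) * s n := by
    intro m
    refine uniq (fun n => 4 * k1 * s (m + n))
      (fun n => s m * (2 * s (n+1) - (4*k+2) * s n) + (2 * s (m+1) - (4*k+2) * s m) * s n)
      ?_ ?_ ?_ ?_
    · simp only [Nat.add_zero]
      rw [hs0, hs1]; ring
    · simp only [show (1:ℕ)+1 = 2 from rfl]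
      have e2 : s 2 = (4*k+2)*s 1 - s 0 := hsrec 0
      rw [e2, hs0, hs1]; ring
    · intro n
      rw [show m+(n+2) = m+n+2 from by omega, show m+(n+1) = m+n+1 from by omega,
        hsrec (m+n)]
      ring
    · intro n
      rw [show n+2+1 = n+1+2 from by omega, hsrec (n+1),
        show n+1+1 = n+2 from by omega, hsrec n]
      ring
  -- key step: superadditivity of the squared sequence
  have hkey : ∀ a b : ℕ, 1 ≤ a → 1 ≤ b →
      4 * k0 * (k+1) * s a ^ 2 * s b ^ 2 < s (a + b) ^ 2 := by
    intro a b ha hb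
    have hsa := hspos a ha
    have hsb := hspos b hb
    have hwa := hwpos a
    have hwb := hwpos b
    have qa := hwsq a
    have qb := hwsq b
    have e := hadd a b
    set wa := 2 * s (a+1) - (4*k+2) * s a with hwadef
    set wb := 2 * s (b+1) - (4*k+2) * s b with hwbdef
    clear_value wa wb
    clear hwadef hwbdef hmono hspos hwpos hinv hwsq uniq hadd hsrec hs0 hs1 hk0sf
    have hD : (0:ℤ) < 16*k*(k+1) := by nlinarith
    have c2 : (0:ℤ) < 16*k1^2 := by positivity
    have hcross : 16*k*(k+1) * (s a * s b) < wa * wb := by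
      have hprod : wa^2 * wb^2
          = (16*k*(k+1) * s a ^2 + 16*k1^2) * (16*k*(k+1) * s b^2 + 16*k1^2) := by
        rw [qa, qb]
      have t1 : (0:ℤ) ≤ (16*k*(k+1)*s a^2) * (16*k1^2) :=
        mul_nonneg (mul_nonneg hD.le (sq_nonneg _)) c2.le
      have t2 : (0:ℤ) ≤ (16*k*(k+1)*s b^2) * (16*k1^2) :=
        mul_nonneg (mul_nonneg hD.le (sq_nonneg _)) c2.le
      have t3 : (0:ℤ) < (16*k1^2) * (16*k1^2) := mul_pos c2 c2
      have h1 : (16*k*(k+1) * (s a * s b))^2 < (wa*wb)^2 := by nlinarith [hprod, t1, t2, t3]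
      exact lt_of_pow_lt_pow_left₀ 2 (mul_pos hwa hwb).le h1
    have hcross2 : 2*(s a * s b)*(16*k*(k+1)*(s a * s b)) < 2*(s a * s b)*(wa*wb) :=
      mul_lt_mul_of_pos_left hcross (by positivity)
    have exp : 16*k1^2 * s (a+b)^2
        = s a^2 * (16*k*(k+1)*s b^2 + 16*k1^2) + s b^2 * (16*k*(k+1)*s a^2 + 16*k1^2)
          + 2*(s a * s b)*(wa*wb) := by
      linear_combination (4*k1*s (a+b) + s a * wb + wa * s b) * e + s a^2 * qb + s b^2 * qa
    have hkk : 16*k1^2 * (4*k0*(k+1)*s a^2*s b^2) = 64*k*(k+1)*(s a^2*s b^2) := by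
      linear_combination (-(64*(k+1)*(s a^2*s b^2))) * hk
    have main16 : 16*k1^2 * (4*k0*(k+1)*s a^2*s b^2) < 16*k1^2 * s (a+b)^2 := by
      rw [hkk]
      nlinarith [exp, hcross2, mul_nonneg c2.le (sq_nonneg (s a)),
        mul_nonneg c2.le (sq_nonneg (s b))]
    exact lt_of_mul_lt_mul_left main16 (by positivity)
  have hEpos : (0:ℤ) < 4*k0*(k+1) := by nlinarith
  have hsν := hspos ν hν
  have hiter : ∀ j : ℕ, (4*k0*(k+1))^(j+1) * s ν ^ (2*(j+2)) < s ((j+2)*ν)^2 := by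
    intro j
    induction j with
    | zero =>
      have h := hkey ν ν hν hν
      rw [show ((0:ℕ)+2)*ν = ν + ν from by omega]
      calc (4*k0*(k+1))^(0+1) * s ν ^ (2*(0+2)) = 4*k0*(k+1) * s ν^2 * s ν^2 := by ring
        _ < _ := h
    | succ j ih =>
      have hb : 1 ≤ (j+2)*ν := Nat.one_le_iff_ne_zero.mpr (Nat.mul_ne_zero (by omega) (by omega))
      have h2 := hkey ((j+2)*ν) ν hb hν
      rw [show (j+1+2)*ν = (j+2)*ν + ν from by ring]
      calc (4*k0*(k+1))^(j+1+1) * s ν ^ (2*(j+1+2))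
          = (4*k0*(k+1) * s ν^2) * ((4*k0*(k+1))^(j+1) * s ν ^ (2*(j+2))) := by ring
        _ < (4*k0*(k+1) * s ν^2) * s ((j+2)*ν)^2 :=
            mul_lt_mul_of_pos_left ih (mul_pos hEpos (pow_pos hsν 2))
        _ = 4*k0*(k+1) * s ((j+2)*ν)^2 * s ν^2 := by ring
        _ < _ := h2
  obtain ⟨j, rfl⟩ : ∃ j, l = j + 2 := ⟨l - 2, by omega⟩
  have h := hiter j
  have hpow : (0:ℤ) ≤ (4*k0*(k+1))^(j+1) * s ν ^ (2*(j+2)) :=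
    mul_nonneg (pow_nonneg hEpos.le _) (pow_nonneg hsν.le _)
  have h16 : (16:ℤ) ≤ (k+1)^(2*j+2) := by
    calc (16:ℤ) = 4^2 := by norm_num
      _ ≤ 4^(2*j+2) := pow_le_pow_right₀ (by norm_num) (by omega)
      _ ≤ (k+1)^(2*j+2) := pow_le_pow_left₀ (by norm_num) (by linarith) _
  have hk0p : k0^(j+2) ≤ k0^(2*j+2) := pow_le_pow_right₀ hk0 (by omega)
  have hco : 16 * k0^(j+2) ≤ (k+1)^(2*j+2) * k0^(2*j+2) :=
    mul_le_mul h16 hk0p (pow_nonneg hk0.le _) (pow_nonneg (by linarith : (0:ℤ) ≤ k+1) _)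
  calc 2^(4*(j+2)) * k0^(j+2) * s ν ^(4*(j+2))
      = 2^(4*j+4) * (16 * k0^(j+2)) * s ν ^(4*(j+2)) := by ring
    _ ≤ 2^(4*j+4) * ((k+1)^(2*j+2) * k0^(2*j+2)) * s ν ^(4*(j+2)) := by
        apply mul_le_mul_of_nonneg_right (mul_le_mul_of_nonneg_left hco (by positivity))
        exact pow_nonneg hsν.le _
    _ = (4*k0*(k+1))^(2*j+2) * s ν ^(4*(j+2)) := by
        rw [show (4*k0*(k+1))^(2*j+2) = 2^(4*j+4) * (k0^(2*j+2) * (k+1)^(2*j+2)) from ?_]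
        · ring
        · rw [mul_pow, mul_pow, show (4:ℤ) = 2^2 from by norm_num, ← pow_mul,
            show 2*(2*j+2) = 4*j+4 from by omega]
          ring
    _ = ((4*k0*(k+1))^(j+1) * s ν ^ (2*(j+2)))^2 := by ring
    _ < (s ((j+2)*ν)^2)^2 := pow_lt_pow_left₀ h hpow two_ne_zero
    _ = s ((j+2)*ν)^4 := by ring
end

section
/- Let k ≥ 3, ν ≥ 1 and l ≥ 3 be integers. Then s_{lν}^2 > 2^{2l}·k0^l·s_ν^{2l} (equivalently, s_{lν} > 2^l·k0^{l/2}·s_ν^l). -/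
theorem stmt_4 (k0 k1 k : ℤ) (hk0 : 0 < k0) (hk1 : 0 < k1)
    (hk0sf : Squarefree k0) (hk : k = k0 * k1 ^ 2) (hk3 : 3 ≤ k)
    (s : ℕ → ℤ) (hs0 : s 0 = 0) (hs1 : s 1 = 2 * k1)
    (hsrec : ∀ ν, s (ν + 2) = (4 * k + 2) * s (ν + 1) - s ν)
    (ν : ℕ) (hν : 1 ≤ ν) (l : ℕ) (hl : 3 ≤ l) :
    2 ^ (2 * l) * k0 ^ l * (s ν) ^ (2 * l) < (s (l * ν)) ^ 2 := by
  have hkpos : (0:ℤ) < k := by linarith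
  -- basic growth facts
  have base : ∀ n, 0 ≤ s n ∧ (4*k+1) * s n ≤ s (n+1) ∧ 0 < s (n+1) := by
    intro n
    induction n with
    | zero =>
      refine ⟨by rw [hs0], by rw [hs0, hs1]; nlinarith, by rw [hs1]; nlinarith⟩
    | succ n ih =>
      obtain ⟨h0, h1, h2⟩ := ih
      have hmono : s n ≤ s (n+1) := by nlinarith
      have hr : s (n+2) = (4*k+2) * s (n+1) - s n := hsrec n
      have h3 : (4*k+1) * s (n+1) ≤ s (n+1+1) := by
        show (4*k+1) * s (n+1) ≤ s (n+2)
        linarith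
      exact ⟨le_of_lt h2, h3, by nlinarith⟩
  -- addition identity
  have addid : ∀ m, (∀ n, 2*k1 * s (m + n + 1) = s (m+1) * s (n+1) - s m * s n)
      ∧ (∀ n, 2*k1 * s (m + n + 2) = s (m+2) * s (n+1) - s (m+1) * s n) := by
    intro m
    induction m with
    | zero =>
      constructor
      · intro n
        simp only [Nat.zero_add]
        rw [hs0, hs1]; ring
      · intro n
        simp only [Nat.zero_add]
        have h2 : s 2 = (4*k+2) * s 1 - s 0 := hsrec 0
        rw [hsrec n, h2, hs0, hs1]
        ring
    | succ m ih =>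
      constructor
      · intro n
        have e := ih.2 n
        have hi : m + 1 + n + 1 = m + n + 2 := by omega
        rw [hi]
        exact e
      · intro n
        have E1 := ih.1 n
        have E2 := ih.2 n
        have hi1 : m + 1 + n + 2 = (m + n + 1) + 2 := by omega
        rw [hi1]
        have R1 := hsrec (m + n + 1)
        have hi2 : m + n + 1 + 1 = m + n + 2 := by omega
        rw [hi2] at R1
        have R2 := hsrec (m + 1)
        have hi3 : m + 1 + 2 = m + 3 := by omega
        have hi4 : m + 1 + 1 = m + 2 := by omega
        rw [hi3, hi4] at R2
        have R0 := hsrec m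
        have hi5 : m + 1 + 2 = m + 3 := by omega
        show 2*k1 * s (m + n + 1 + 2) = s (m + 3) * s (n+1) - s (m + 2) * s n
        linear_combination 2*k1*R1 + (4*k+2)*E2 - E1 - s (n+1) * R2 + s n * R0
  -- multiplicative step
  have mulstep : ∀ a b, 1 ≤ b →
      (16*k^2+8*k) * (s a * s b) ≤ (2*k1*(4*k+1)) * s (a + b) := by
    intro a b hb
    obtain ⟨w, rfl⟩ : ∃ w, b = w + 1 := ⟨b - 1, by omega⟩
    have E := (addid a).1 w
    obtain ⟨ha0, ha1, ha2⟩ := base a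
    obtain ⟨hw0, hw1, hw2⟩ := base w
    have hi : a + (w+1) = a + w + 1 := by omega
    rw [hi]
    have E' : (4*k+1) * (2*k1 * s (a + w + 1))
        = (4*k+1) * (s (a+1) * s (w+1) - s a * s w) := by rw [E]
    have p1 : ((4*k+1) * s a) * ((4*k+1) * s (w+1)) ≤ s (a+1) * ((4*k+1) * s (w+1)) :=
      mul_le_mul_of_nonneg_right ha1
        (mul_nonneg (by linarith) hw2.le)
    have p2 : s a * ((4*k+1) * s w) ≤ s a * s (w+1) :=
      mul_le_mul_of_nonneg_left hw1 ha0
    nlinarith [p1, p2, E']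
  -- iterated growth
  have Dpos : (0:ℤ) < 16*k^2+8*k := by nlinarith
  have Cpos : (0:ℤ) < 2*k1*(4*k+1) := by nlinarith
  have hsν : 0 < s ν := by
    obtain ⟨w, rfl⟩ : ∃ w, ν = w + 1 := ⟨ν - 1, by omega⟩
    exact (base w).2.2
  have growth : ∀ t, (16*k^2+8*k)^t * s ν ^ (t+1)
      ≤ (2*k1*(4*k+1))^t * s ((t+1) * ν) := by
    intro t
    induction t with
    | zero => simp
    | succ t ih =>
      have step := mulstep ((t+1) * ν) ν hν
      have hi : (t+1) * ν + ν = (t+1+1) * ν := by ring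
      rw [hi] at step
      calc (16*k^2+8*k)^(t+1) * s ν ^ (t+1+1)
          = ((16*k^2+8*k) * s ν) * ((16*k^2+8*k)^t * s ν ^ (t+1)) := by ring
        _ ≤ ((16*k^2+8*k) * s ν) * ((2*k1*(4*k+1))^t * s ((t+1) * ν)) := by
            apply mul_le_mul_of_nonneg_left ih
            positivity
        _ = (2*k1*(4*k+1))^t * ((16*k^2+8*k) * (s ((t+1) * ν) * s ν)) := by ring
        _ ≤ (2*k1*(4*k+1))^t * ((2*k1*(4*k+1)) * s ((t+1+1) * ν)) := by
            apply mul_le_mul_of_nonneg_left step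
            positivity
        _ = (2*k1*(4*k+1))^(t+1) * s ((t+1+1) * ν) := by ring
  -- key coefficient inequality (k-version)
  have keyk : ∀ q : ℕ, 4*(4*k+1)^(2*q+4) < k^(q+1) * (4*k+2)^(2*q+4) := by
    intro q
    induction q with
    | zero =>
      show 4*(4*k+1)^4 < k^1 * (4*k+2)^4
      have h : 0 ≤ k - 3 := by linarith
      nlinarith [pow_nonneg h 2, pow_nonneg h 3, pow_nonneg h 4, pow_nonneg h 5, h]
    | succ q ih =>
      have h3 : (4*k+1)^2 ≤ k*(4*k+2)^2 := by nlinarith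
      have e1 : 4*(4*k+1)^(2*(q+1)+4) = (4*(4*k+1)^(2*q+4)) * (4*k+1)^2 := by ring
      calc 4*(4*k+1)^(2*(q+1)+4) = (4*(4*k+1)^(2*q+4)) * (4*k+1)^2 := e1
        _ < (k^(q+1) * (4*k+2)^(2*q+4)) * (4*k+1)^2 := by
            apply mul_lt_mul_of_pos_right ih
            positivity
        _ ≤ (k^(q+1) * (4*k+2)^(2*q+4)) * (k*(4*k+2)^2) := by
            apply mul_le_mul_of_nonneg_left h3
            positivity
        _ = k^(q+1+1) * (4*k+2)^(2*(q+1)+4) := by ring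
  obtain ⟨q, rfl⟩ : ∃ q, l = q + 3 := ⟨l - 3, by omega⟩
  -- key coefficient inequality
  have hkk : k^(q+1) ≤ k0^(q+1) * k1^(2*q+4) := by
    have h1 : k^(q+1) = k0^(q+1) * k1^(2*q+2) := by rw [hk]; ring
    rw [h1]
    apply mul_le_mul_of_nonneg_left _ (by positivity)
    exact pow_le_pow_right₀ hk1 (by omega)
  have key : 4*(4*k+1)^(2*q+4) < k0^(q+1) * k1^(2*q+4) * (4*k+2)^(2*q+4) :=
    lt_of_lt_of_le (keyk q)
      (mul_le_mul_of_nonneg_right hkk (by positivity))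
  have Fpos : (0:ℤ) < 2^(4*q+8) * k0^(q+3) * k1^(2*q+4) := by positivity
  have H2 : 2^(2*(q+3)) * k0^(q+3) * (2*k1*(4*k+1))^(2*q+4) < (16*k^2+8*k)^(2*q+4) := by
    have e1 : (2*k1*(4*k+1))^(2*q+4) = 2^(2*q+4) * k1^(2*q+4) * (4*k+1)^(2*q+4) := by
      rw [mul_pow, mul_pow]
    have e2 : (16*k^2+8*k)^(2*q+4)
        = 2^(3*(2*q+4)) * k^(2*q+4) * (2*k+1)^(2*q+4) := by
      rw [show (16*k^2+8*k : ℤ) = 2^3*k*(2*k+1) from by ring, mul_pow, mul_pow, ← pow_mul]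
    have e3 : (4*k+2 : ℤ)^(2*q+4) = 2^(2*q+4) * (2*k+1)^(2*q+4) := by
      rw [show (4*k+2 : ℤ) = 2*(2*k+1) from by ring, mul_pow]
    have e4 : k^(2*q+4) = k0^(2*q+4) * k1^(2*(2*q+4)) := by
      rw [hk, mul_pow, ← pow_mul]
    rw [e3] at key
    rw [e1, e2, e4]
    calc 2^(2*(q+3)) * k0^(q+3) * (2^(2*q+4) * k1^(2*q+4) * (4*k+1)^(2*q+4))
        = (2^(4*q+8) * k0^(q+3) * k1^(2*q+4)) * (4*(4*k+1)^(2*q+4)) := by ring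
      _ < (2^(4*q+8) * k0^(q+3) * k1^(2*q+4))
          * (k0^(q+1) * k1^(2*q+4) * (2^(2*q+4) * (2*k+1)^(2*q+4))) :=
          mul_lt_mul_of_pos_left key Fpos
      _ = 2^(3*(2*q+4)) * (k0^(2*q+4) * k1^(2*(2*q+4))) * (2*k+1)^(2*q+4) := by ring
  -- square the growth inequality at t = q+2
  have G := growth (q+2)
  have H1 : ((16*k^2+8*k)^(q+2) * s ν ^ (q+3))^2
      ≤ ((2*k1*(4*k+1))^(q+2) * s ((q+3) * ν))^2 := by
    apply pow_le_pow_left₀ (by positivity)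
    exact G
  have HX : (0:ℤ) < s ν ^ (2*q+6) := by positivity
  apply lt_of_mul_lt_mul_left (a := (2*k1*(4*k+1))^(2*q+4)) _ (by positivity)
  calc (2*k1*(4*k+1))^(2*q+4) * (2^(2*(q+3)) * k0^(q+3) * s ν ^ (2*(q+3)))
      = (2^(2*(q+3)) * k0^(q+3) * (2*k1*(4*k+1))^(2*q+4)) * s ν ^ (2*q+6) := by ring
    _ < (16*k^2+8*k)^(2*q+4) * s ν ^ (2*q+6) := mul_lt_mul_of_pos_right H2 HX
    _ = ((16*k^2+8*k)^(q+2) * s ν ^ (q+3))^2 := by ring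
    _ ≤ ((2*k1*(4*k+1))^(q+2) * s ((q+3) * ν))^2 := H1
    _ = (2*k1*(4*k+1))^(2*q+4) * s ((q+3) * ν)^2 := by ring
end

section
/- Let k ≥ 3. There is no nonnegative integer m divisible by ν with s_m = w_1; that is, the equation s_m = 2·s_ν·r has no solution with ν | m. -/
def gseq (k : ℤ) : ℕ → ℤ
  | 0 => 1
  | 1 => 2 * k + 1
  | (n + 2) => (4 * k + 2) * gseq k (n + 1) - gseq k n

theorem stmt_5 (k0 k1 k : ℤ) (hk0 : 0 < k0) (hk1 : 0 < k1)
    (hk0sf : Squarefree k0) (hk : k = k0 * k1 ^ 2) (hk3 : 3 ≤ k)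
    (s : ℕ → ℤ) (hs0 : s 0 = 0) (hs1 : s 1 = 2 * k1)
    (hsrec : ∀ ν, s (ν + 2) = (4 * k + 2) * s (ν + 1) - s ν)
    (ν : ℕ) (hν : 1 ≤ ν) (c r : ℤ)
    (hc : c = k0 * (s ν) ^ 2 + 1) (hr : 0 < r) (hcr : c - k = r ^ 2)
    (w : ℕ → ℤ) (hw0 : w 0 = 0) (hw1 : w 1 = 2 * s ν * r)
    (hwrec : ∀ n, w (n + 2) = (4 * c - 2) * w (n + 1) - w n) :
    ¬∃ m : ℕ, ν ∣ m ∧ s m = w 1 := by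
  subst hk
  set k := k0 * k1 ^ 2 with hk
  set g := gseq k with hgdef
  have hg0 : g 0 = 1 := rfl
  have hg1 : g 1 = 2 * k + 1 := rfl
  have hgrec : ∀ n, g (n + 2) = (4 * k + 2) * g (n + 1) - g n := fun n => rfl
  have hkpos : (0:ℤ) < k := by linarith
  -- pair relations
  have pair : ∀ n, s (n + 1) = (2 * k + 1) * s n + 2 * k1 * g n ∧
      g (n + 1) = (2 * k + 1) * g n + 2 * k0 * k1 * (k + 1) * s n := by
    have H : ∀ n, (s (n + 1) = (2 * k + 1) * s n + 2 * k1 * g n ∧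
        g (n + 1) = (2 * k + 1) * g n + 2 * k0 * k1 * (k + 1) * s n) ∧
        (s (n + 2) = (2 * k + 1) * s (n + 1) + 2 * k1 * g (n + 1) ∧
        g (n + 2) = (2 * k + 1) * g (n + 1) + 2 * k0 * k1 * (k + 1) * s (n + 1)) := by
      intro n
      induction n with
      | zero =>
        refine ⟨⟨?_, ?_⟩, ?_, ?_⟩
        · rw [hs1, hs0, hg0]; ring
        · rw [hg1, hg0, hs0]; ring
        · rw [hsrec 0, hs1, hs0, hg1]; ring
        · rw [hgrec 0, hg1, hg0, hs1]; ring
      | succ n ih =>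
        refine ⟨ih.2, ?_, ?_⟩
        · rw [hsrec (n + 1)]
          linear_combination (2 * k + 1) * ih.2.1 - 2 * k1 * ih.2.2
        · rw [hgrec (n + 1)]
          linear_combination (2 * k + 1) * ih.2.2 - 2 * k0 * k1 * (k + 1) * ih.2.1
    exact fun n => (H n).1
  -- norm identity
  have norm : ∀ n, g n ^ 2 = k0 * (k + 1) * s n ^ 2 + 1 := by
    intro n
    induction n with
    | zero => rw [hg0, hs0]; ring
    | succ n ih =>
      have p := pair n
      linear_combination (g (n + 1) + (2 * k + 1) * g n + 2 * k0 * k1 * (k + 1) * s n) * p.2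
        - k0 * (k + 1) * (s (n + 1) + (2 * k + 1) * s n + 2 * k1 * g n) * p.1 + ih
  -- addition formula
  have add : ∀ M n, s (M + n) = s M * g n + g M * s n := by
    intro M n
    induction n using Nat.strong_induction_on with
    | _ n ih =>
      match n with
      | 0 => simp [hs0, hg0]
      | 1 =>
        have p := (pair M).1
        simp only [hg1, hs1]
        linear_combination p
      | (n + 2) =>
        have e : M + (n + 2) = (M + n) + 2 := by omega
        rw [e, hsrec (M + n)]
        have ih1 : s (M + n) = s M * g n + g M * s n := ih n (by omega)
        have ih2 : s ((M + n) + 1) = s M * g (n + 1) + g M * s (n + 1) := by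
          have e2 : (M + n) + 1 = M + (n + 1) := by omega
          rw [e2]; exact ih (n + 1) (by omega)
        linear_combination (4 * k + 2) * ih2 - ih1 - s M * hgrec n - g M * hsrec n
  -- monotonicity
  have mono : ∀ n, 0 ≤ s n ∧ s n < s (n + 1) := by
    intro n
    induction n with
    | zero => rw [hs0, hs1]; constructor <;> linarith
    | succ n ih =>
      have h2 := hsrec n
      constructor
      · linarith [ih.1, ih.2]
      · nlinarith [ih.1, ih.2, hkpos]
  have smono : StrictMono s := strictMono_nat_of_lt_succ fun n => (mono n).2
  have gmono : ∀ n, 0 < g n ∧ g n ≤ g (n + 1) := by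
    intro n
    induction n with
    | zero => rw [hg0, hg1]; constructor <;> linarith
    | succ n ih =>
      have h2 := hgrec n
      constructor
      · linarith [ih.1, ih.2]
      · nlinarith [ih.1, ih.2, hkpos]
  -- finale
  rintro ⟨m, ⟨t, rfl⟩, hm⟩
  rw [hw1] at hm
  have hsν : 0 < s ν := by
    have := smono (show 0 < ν from hν)
    rwa [hs0] at this
  match t with
  | 0 =>
    rw [Nat.mul_zero, hs0] at hm
    nlinarith
  | 1 =>
    rw [Nat.mul_one] at hm
    nlinarith
  | (t + 2) =>
    have hrg : r < g ν := by
      have h1 := norm ν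
      have h2 : r ^ 2 < g ν ^ 2 := by nlinarith [sq_nonneg (s ν)]
      nlinarith [(gmono ν).1]
    have h2ν : s (ν + ν) = 2 * s ν * g ν := by
      have := add ν ν; rw [this]; ring
    have hle : s (ν + ν) ≤ s (ν * (t + 2)) := by
      apply smono.monotone
      have : 1 ≤ ν := hν
      nlinarith
    nlinarith
end

section
/- If k ≥ 3 and n is an integer with 2 ≤ n ≤ k+1, then s_{2nν} > w_n. -/
def rec2 (P : ℤ) : ℕ → ℤ
  | 0 => 0
  | 1 => 1
  | (n+2) => P * rec2 P (n+1) - rec2 P n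

lemma rec2_zero (P : ℤ) : rec2 P 0 = 0 := rfl
lemma rec2_one (P : ℤ) : rec2 P 1 = 1 := rfl
lemma rec2_rec (P : ℤ) (n : ℕ) : rec2 P (n+2) = P * rec2 P (n+1) - rec2 P n := rfl

/-- addition formula -/
lemma rec2_add (P : ℤ) (m : ℕ) : ∀ n : ℕ,
    rec2 P (m+n+1) = rec2 P (m+1) * rec2 P (n+1) - rec2 P m * rec2 P n := by
  intro n
  induction n using Nat.twoStepInduction with
  | zero => simp [rec2]
  | one =>
    show rec2 P (m+1+1) = _
    rw [rec2_rec]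
    show _ = rec2 P (m+1) * rec2 P (1+1) - _
    rw [rec2_rec]
    simp [rec2]; ring
  | more n ih1 ih2 =>
    have h1 : m + (n+2) + 1 = (m + (n+1) + 1) + 1 := by omega
    have h2 : m + (n+1) + 1 = (m + n + 1) + 1 := by omega
    have : rec2 P (m + (n+2) + 1) = P * rec2 P (m + (n+1) + 1) - rec2 P (m + n + 1) := by
      rw [h1, h2]; exact rec2_rec P (m+n+1)
    rw [this, ih1, ih2, show n+2+1 = n+1+2 from rfl, rec2_rec P (n+1),
      show n+1+1 = n+2 from rfl, rec2_rec P n]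
    ring

/-- invariant -/
lemma rec2_inv (P : ℤ) : ∀ m : ℕ,
    rec2 P (m+1)^2 - P * rec2 P (m+1) * rec2 P m + rec2 P m ^2 = 1 := by
  intro m
  induction m with
  | zero => simp [rec2]
  | succ m ih =>
    rw [show m+1+1 = m+2 from rfl, rec2_rec]
    linear_combination ih

lemma rec2_mono (P : ℤ) (hP : 2 ≤ P) : ∀ m : ℕ,
    0 ≤ rec2 P m ∧ rec2 P m + 1 ≤ rec2 P (m+1) := by
  intro m
  induction m with
  | zero => simp [rec2]
  | succ m ih =>
    obtain ⟨h1, h2⟩ := ih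
    constructor
    · linarith
    · rw [show m+1+1 = m+2 from rfl, rec2_rec]
      nlinarith

def vrec (P : ℤ) (m : ℕ) : ℤ := 2 * rec2 P (m+1) - P * rec2 P m

lemma vrec_zero (P : ℤ) : vrec P 0 = 2 := by simp [vrec, rec2]
lemma vrec_one (P : ℤ) : vrec P 1 = P := by simp [vrec, rec2]; ring
lemma vrec_rec (P : ℤ) (n : ℕ) : vrec P (n+2) = P * vrec P (n+1) - vrec P n := by
  simp only [vrec, show n+2+1 = n+1+2 from rfl, rec2_rec]
  ring

lemma vrec_mono (P : ℤ) (hP : 2 ≤ P) : ∀ m : ℕ, 2 ≤ vrec P m ∧ vrec P m ≤ vrec P (m+1) := by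
  intro m
  induction m with
  | zero => rw [vrec_zero, vrec_one]; exact ⟨le_refl 2, hP⟩
  | succ m ih =>
    obtain ⟨h1, h2⟩ := ih
    refine ⟨by linarith, ?_⟩
    rw [vrec_rec]
    nlinarith

lemma vrec_sq (P : ℤ) (m : ℕ) : vrec P m ^ 2 = (P^2 - 4) * rec2 P m ^2 + 4 := by
  have := rec2_inv P m
  unfold vrec
  linear_combination 4 * this

/-- shift identity -/
lemma rec2_shift (P : ℤ) : ∀ d x : ℕ,
    rec2 P (x + 2*d) = vrec P d * rec2 P (x + d) - rec2 P x := by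
  intro d
  induction d using Nat.twoStepInduction with
  | zero => intro x; simp [vrec_zero]; ring
  | one =>
    intro x
    rw [vrec_one, show x + 2*1 = x+2 from rfl, rec2_rec, show x + 1 = x + 1 from rfl]
  | more d ih1 ih2 =>
    intro x
    have hr : rec2 P (x + 2*(d+2)) = P * rec2 P (x+1 + 2*(d+1)) - rec2 P (x+2 + 2*d) := by
      have h1 : x + 2*(d+2) = (x + 2*d + 2) + 2 := by omega
      have h2 : x+1+2*(d+1) = (x + 2*d + 2) + 1 := by omega
      have h3 : x+2+2*d = x + 2*d + 2 := by omega
      rw [h1, h2, h3, rec2_rec]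
    rw [hr, ih2 (x+1), ih1 (x+2), vrec_rec]
    rw [show x+1+(d+1) = x+d+2 by omega, show x+2+d = x+d+2 by omega, rec2_rec P x]
    ring

/-- doubling for v at positive index -/
lemma vrec_double (P : ℤ) (μ : ℕ) :
    vrec P (2*(μ+1)) = (P^2 - 4) * rec2 P (μ+1) ^ 2 + 2 := by
  have hadd1 := rec2_add P (μ+1) (μ+1)   -- rec2 (2μ+3)
  have hadd2 := rec2_add P μ (μ+1)       -- rec2 (2μ+2)
  have hinv := rec2_inv P (μ+1)
  have hrec := rec2_rec P μ
  unfold vrec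
  rw [show 2*(μ+1)+1 = (μ+1)+(μ+1)+1 by omega, hadd1,
    show 2*(μ+1) = μ+(μ+1)+1 by omega, hadd2]
  rw [show μ+1+1 = μ+2 from rfl] at *
  linear_combination (2:ℤ) * hinv + (P * rec2 P (μ+1)) * hrec
set_option maxHeartbeats 1600000 in
theorem stmt_6 (k0 k1 k : ℤ) (hk0 : 0 < k0) (hk1 : 0 < k1)
    (hk0sf : Squarefree k0) (hk : k = k0 * k1 ^ 2) (hk3 : 3 ≤ k)
    (s : ℕ → ℤ) (hs0 : s 0 = 0) (hs1 : s 1 = 2 * k1)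
    (hsrec : ∀ ν, s (ν + 2) = (4 * k + 2) * s (ν + 1) - s ν)
    (ν : ℕ) (hν : 1 ≤ ν) (c r : ℤ)
    (hc : c = k0 * (s ν) ^ 2 + 1) (hr : 0 < r) (hcr : c - k = r ^ 2)
    (w : ℕ → ℤ) (hw0 : w 0 = 0) (hw1 : w 1 = 2 * s ν * r)
    (hwrec : ∀ n, w (n + 2) = (4 * c - 2) * w (n + 1) - w n)
    (n : ℕ) (hn2 : 2 ≤ n) (hnk : (n : ℤ) ≤ k + 1) :
    w n < s (2 * n * ν) := by
  have hP2 : (2:ℤ) ≤ 4*k+2 := by linarith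
  have hsu : ∀ m, s m = 2*k1 * rec2 (4*k+2) m := by
    intro m
    induction m using Nat.twoStepInduction with
    | zero => rw [hs0, rec2_zero]; ring
    | one => rw [hs1, rec2_one]; ring
    | more m ih1 ih2 => rw [hsrec, rec2_rec, ih1, ih2]; ring
  obtain ⟨μ, rfl⟩ : ∃ μ, ν = μ + 1 := ⟨ν-1, by omega⟩
  have humono := rec2_mono (4*k+2) hP2
  have huν : 1 ≤ rec2 (4*k+2) (μ+1) := by
    have h := humono μ
    linarith [h.1, h.2]
  have hupos : (0:ℤ) < rec2 (4*k+2) (μ+1) := by linarith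
  have hvν2 : 2 ≤ vrec (4*k+2) (μ+1) := (vrec_mono (4*k+2) hP2 (μ+1)).1
  have hsν : s (μ+1) = 2*k1 * rec2 (4*k+2) (μ+1) := hsu _
  have hc' : c = 4*k*(rec2 (4*k+2) (μ+1))^2 + 1 := by
    rw [hc, hsν, hk]; ring
  have hr2 : r^2 = 4*k*(rec2 (4*k+2) (μ+1))^2 + 1 - k := by
    rw [← hcr, hc']
  have hL : vrec (4*k+2) (2*(μ+1)) = (16*k^2+16*k) * (rec2 (4*k+2) (μ+1))^2 + 2 := by
    rw [vrec_double]; ring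
  have hLM : 4*c - 2 ≤ vrec (4*k+2) (2*(μ+1)) := by
    rw [hL, hc']
    nlinarith [sq_nonneg (rec2 (4*k+2) (μ+1))]
  have hM2 : (2:ℤ) ≤ 4*c-2 := by
    rw [hc']
    nlinarith [sq_nonneg (rec2 (4*k+2) (μ+1))]
  have hvsq := vrec_sq (4*k+2) (μ+1)
  have hv2r : 2*r < vrec (4*k+2) (μ+1) := by
    nlinarith [hvsq, hr2, hvν2, hr, hk3, huν, sq_nonneg (rec2 (4*k+2) (μ+1))]
  -- base values
  have ht0 : s (2*0*(μ+1)) = 0 := by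
    rw [show 2*0*(μ+1) = 0 by ring]; exact hs0
  have ht1 : w 1 < s (2*1*(μ+1)) := by
    have hshift := rec2_shift (4*k+2) (μ+1) 0
    rw [Nat.zero_add, Nat.zero_add, rec2_zero] at hshift
    rw [hw1, hsν, hsu (2*1*(μ+1)), show 2*1*(μ+1) = 2*(μ+1) by ring, hshift]
    have key : 0 < 2*k1*rec2 (4*k+2) (μ+1) * (vrec (4*k+2) (μ+1) - 2*r) :=
      mul_pos (by positivity) (by linarith)
    linarith [key]
  have hw1pos : 0 < w 1 := by
    rw [hw1, hsν]
    exact mul_pos (mul_pos two_pos (mul_pos (mul_pos two_pos hk1) hupos)) hr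
  -- recurrence for t m = s (2*m*(μ+1))
  have htrec : ∀ m, s (2*(m+2)*(μ+1)) =
      vrec (4*k+2) (2*(μ+1)) * s (2*(m+1)*(μ+1)) - s (2*m*(μ+1)) := by
    intro m
    simp only [hsu]
    rw [show 2*(m+2)*(μ+1) = 2*m*(μ+1) + 2*(2*(μ+1)) by ring, rec2_shift,
      show 2*m*(μ+1) + 2*(μ+1) = 2*(m+1)*(μ+1) by ring]
    ring
  -- invariant
  have hC : ∀ m, 0 ≤ s (2*m*(μ+1)) ∧ s (2*m*(μ+1)) ≤ s (2*(m+1)*(μ+1)) ∧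
      0 ≤ s (2*m*(μ+1)) - w m ∧
      s (2*m*(μ+1)) - w m ≤ s (2*(m+1)*(μ+1)) - w (m+1) := by
    intro m
    induction m with
    | zero =>
      refine ⟨le_of_eq ht0.symm, ?_, ?_, ?_⟩
      · rw [ht0]; linarith [ht1, hw1pos]
      · rw [ht0, hw0]; norm_num
      · rw [ht0, hw0]; linarith [ht1]
    | succ m ih =>
      obtain ⟨h1, h2, h3, h4⟩ := ih
      have hre := htrec m
      have hwre := hwrec m
      have A : 0 ≤ (vrec (4*k+2) (2*(μ+1)) - (4*c-2)) * s (2*(m+1)*(μ+1)) :=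
        mul_nonneg (by linarith) (by linarith)
      have B : 0 ≤ ((4*c-2) - 2) * (s (2*(m+1)*(μ+1)) - w (m+1)) :=
        mul_nonneg (by linarith) (by linarith)
      have C2 : 0 ≤ ((4*c-2) - 2) * s (2*(m+1)*(μ+1)) :=
        mul_nonneg (by linarith) (by linarith)
      refine ⟨by linarith, by linarith, by linarith, by linarith⟩
  have hD : ∀ m, s (2*1*(μ+1)) - w 1 ≤ s (2*(m+1)*(μ+1)) - w (m+1) := by
    intro m
    induction m with
    | zero => exact le_refl _
    | succ m ih => exact le_trans ih (hC (m+1)).2.2.2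
  obtain ⟨m, rfl⟩ : ∃ m, n = m + 1 := ⟨n-1, by omega⟩
  have := hD m
  linarith [ht1]
end

section
/- Assume n ≥ 2 and that one of the following holds: (i) ν = 7, n ≤ 7 and k ≥ 12; (ii) ν = 8, n ≤ 8 and k ≥ 15; (iii) ν ≥ 9, n ≤ 8 and k ≥ 7. Then s_{(2n−1)ν} < w_n. -/
private def tk (k : ℤ) : ℕ → ℤ
  | 0 => 1
  | 1 => 2 * k + 1
  | n + 2 => (4 * k + 2) * tk k (n + 1) - tk k n

private lemma tk_zero (k : ℤ) : tk k 0 = 1 := rfl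
private lemma tk_one (k : ℤ) : tk k 1 = 2 * k + 1 := rfl
private lemma tk_rec (k : ℤ) (n : ℕ) :
    tk k (n + 2) = (4 * k + 2) * tk k (n + 1) - tk k n := rfl

private lemma S_ge_two (k k1 S : ℤ) (ν' : ℕ) (hk1 : 1 ≤ k1) (hk : 1 ≤ k)
    (hSlow : 2 * k1 * (4 * k + 1) ^ ν' ≤ S) : 2 ≤ S := by
  have h := pow_pos (show (0:ℤ) < 4 * k + 1 by linarith) ν'
  have hX : (1:ℤ) ≤ (4 * k + 1) ^ ν' := by linarith [Int.lt_iff_add_one_le.mp h]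
  nlinarith [mul_nonneg (by linarith : (0:ℤ) ≤ k1 - 1)
    (by linarith : (0:ℤ) ≤ (4 * k + 1) ^ ν' - 1)]

private lemma A_ge_six (k0 S A : ℤ) (hA : A = 4 * k0 * S ^ 2 + 2)
    (hk0 : 1 ≤ k0) (hS : 2 ≤ S) : 6 ≤ A := by
  have h1 : (4:ℤ) ≤ S ^ 2 := by nlinarith
  nlinarith [mul_nonneg (by linarith : (0:ℤ) ≤ k0 - 1) (by linarith : (0:ℤ) ≤ S ^ 2 - 4)]

private lemma core_ineq (k0 k1 k S r : ℤ) (m ν' : ℕ)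
    (hk0 : 1 ≤ k0) (hk1 : 1 ≤ k1) (hk : k = k0 * k1 ^ 2) (hkp : 1 ≤ k)
    (hSlow : 2 * k1 * (4 * k + 1) ^ ν' ≤ S)
    (hr : 0 < r) (hr2 : 4 * r ^ 2 = 4 * k0 * S ^ 2 + 4 - 4 * k)
    (hm : m + 1 ≤ ν') :
    (k + 1) ^ (m + 1) < 2 * r := by
  have hXp := pow_pos (show (0:ℤ) < 4 * k + 1 by linarith) ν'
  have hXpos : (1:ℤ) ≤ (4 * k + 1) ^ ν' := by linarith [Int.lt_iff_add_one_le.mp hXp]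
  have hq : ((k + 1) : ℤ) ^ (m + 1) ≤ (4 * k + 1) ^ (m + 1) :=
    pow_le_pow_left₀ (by linarith) (by linarith) _
  have hq2 : ((4 * k + 1) : ℤ) ^ (m + 1) ≤ (4 * k + 1) ^ ν' :=
    pow_le_pow_right₀ (by linarith) hm
  have h1 : 0 ≤ S - 2 * k1 * (4 * k + 1) ^ ν' := by linarith
  have h2 : 0 ≤ S + 2 * k1 * (4 * k + 1) ^ ν' := by nlinarith
  have h3 := mul_nonneg h1 h2
  have hkX : k * ((4 * k + 1) ^ ν') ^ 2 = k0 * k1 ^ 2 * ((4 * k + 1) ^ ν') ^ 2 := by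
    rw [hk]
  have hS2 : 4 * k * ((4 * k + 1) ^ ν') ^ 2 ≤ k0 * S ^ 2 := by
    nlinarith [mul_nonneg (by linarith : (0:ℤ) ≤ k0) h3, hkX]
  have hX1 : (0:ℤ) ≤ ((4 * k + 1) ^ ν') ^ 2 - 1 := by nlinarith
  have hkq : 0 ≤ ((k + 1) : ℤ) ^ (m + 1) := by positivity
  have hle : (((k + 1) : ℤ) ^ (m + 1)) ^ 2 ≤ ((4 * k + 1) ^ ν') ^ 2 :=
    pow_le_pow_left₀ hkq (hq.trans hq2) 2
  have hXX : ((4 * k + 1 : ℤ) ^ ν') ^ 2 < 4 * r ^ 2 := by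
    nlinarith [mul_nonneg (by linarith : (0:ℤ) ≤ 16 * k - 1) hX1]
  have hsq : (((k + 1) : ℤ) ^ (m + 1)) ^ 2 < (2 * r) ^ 2 := by nlinarith
  exact lt_of_pow_lt_pow_left₀ 2 (by linarith) hsq

private lemma final_ineq (k0 k S r A B : ℤ) (m : ℕ)
    (hk : 1 ≤ k) (hk0 : 1 ≤ k0) (hS : 2 ≤ S)
    (hA : A = 4 * k0 * S ^ 2 + 2) (hB : B = 4 * k0 * (k + 1) * S ^ 2 + 2)
    (h2r : (k + 1) ^ (m + 1) < 2 * r) :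
    B ^ m * ((B + 1) * S) < (A - 1) ^ m * (A * (2 * S * r)) := by
  have hSpos : (0:ℤ) < S := by linarith
  have hA6 : (6:ℤ) ≤ A := A_ge_six k0 S A hA hk0 hS
  have hBpos : (0:ℤ) < B := by
    have h := mul_nonneg (mul_nonneg (by linarith : (0:ℤ) ≤ 4 * k0)
      (by linarith : (0:ℤ) ≤ k + 1)) (sq_nonneg S)
    linarith [hB]
  have hABle : B ≤ (k + 1) * (A - 1) := by
    rw [hB, hA]
    nlinarith [sq_nonneg S, mul_nonneg (mul_nonneg (by linarith : (0:ℤ) ≤ 4 * k0)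
      (by linarith : (0:ℤ) ≤ k - 1)) (sq_nonneg S)]
  have hABle2 : B + 1 ≤ (k + 1) * A := by
    rw [hB, hA]; nlinarith [sq_nonneg S]
  have hA1pos : (0:ℤ) < A - 1 := by linarith
  have hP : (0:ℤ) < (A - 1) ^ m * A := mul_pos (pow_pos hA1pos m) (by linarith)
  have hBm : B ^ m ≤ ((k + 1) * (A - 1)) ^ m :=
    pow_le_pow_left₀ (le_of_lt hBpos) hABle m
  have h5 : B ^ m * (B + 1) ≤ (k + 1) ^ (m + 1) * ((A - 1) ^ m * A) := by
    calc B ^ m * (B + 1) ≤ ((k + 1) * (A - 1)) ^ m * ((k + 1) * A) := by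
          apply mul_le_mul hBm hABle2 (by linarith)
            (pow_nonneg (mul_nonneg (by linarith) (by linarith)) m)
      _ = (k + 1) ^ (m + 1) * ((A - 1) ^ m * A) := by rw [mul_pow]; ring
  have h6 : (k + 1) ^ (m + 1) * ((A - 1) ^ m * A) < (2 * r) * ((A - 1) ^ m * A) :=
    mul_lt_mul_of_pos_right h2r hP
  have h7 : B ^ m * (B + 1) < (2 * r) * ((A - 1) ^ m * A) := lt_of_le_of_lt h5 h6
  have h8 := mul_lt_mul_of_pos_right h7 hSpos
  nlinarith [h8]

set_option maxHeartbeats 1000000 in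
theorem stmt_7 (k0 k1 k : ℤ) (hk0 : 0 < k0) (hk1 : 0 < k1)
    (hk0sf : Squarefree k0) (hk : k = k0 * k1 ^ 2)
    (s : ℕ → ℤ) (hs0 : s 0 = 0) (hs1 : s 1 = 2 * k1)
    (hsrec : ∀ ν, s (ν + 2) = (4 * k + 2) * s (ν + 1) - s ν)
    (ν : ℕ) (hν : 1 ≤ ν) (c r : ℤ)
    (hc : c = k0 * (s ν) ^ 2 + 1) (hr : 0 < r) (hcr : c - k = r ^ 2)
    (w : ℕ → ℤ) (hw0 : w 0 = 0) (hw1 : w 1 = 2 * s ν * r)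
    (hwrec : ∀ n, w (n + 2) = (4 * c - 2) * w (n + 1) - w n)
    (n : ℕ) (hn : 2 ≤ n)
    (hcase : (ν = 7 ∧ n ≤ 7 ∧ 12 ≤ k) ∨ (ν = 8 ∧ n ≤ 8 ∧ 15 ≤ k) ∨
      (9 ≤ ν ∧ n ≤ 8 ∧ 7 ≤ k)) :
    s ((2 * n - 1) * ν) < w n := by
  have hk1' : (1 : ℤ) ≤ k1 := hk1
  have hk0' : (1 : ℤ) ≤ k0 := hk0
  have hkpos : (1 : ℤ) ≤ k := by nlinarith
  -- key simultaneous recurrence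
  have key : ∀ p, s (p + 1) = (2 * k + 1) * s p + 2 * k1 * (tk k p) ∧
      tk k (p + 1) = (2 * k + 1) * tk k p + 2 * k0 * (k + 1) * k1 * s p := by
    intro p
    induction p with
    | zero =>
      constructor
      · show s 1 = (2 * k + 1) * s 0 + 2 * k1 * (tk k 0)
        rw [hs1, hs0, tk_zero]; ring
      · show tk k 1 = (2 * k + 1) * tk k 0 + 2 * k0 * (k + 1) * k1 * s 0
        rw [tk_one, tk_zero, hs0]; ring
    | succ q ih =>
      obtain ⟨hsa, hta⟩ := ih
      constructor
      · rw [show q + 1 + 1 = q + 2 by omega, hsrec q, hsa, hta, hk]; ring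
      · rw [show q + 1 + 1 = q + 2 by omega, tk_rec k q, hta, hsa, hk]; ring
  -- Pell equation
  have pell : ∀ p, (tk k p) ^ 2 - k0 * (k + 1) * (s p) ^ 2 = 1 := by
    intro p
    induction p with
    | zero => rw [hs0, tk_zero]; ring
    | succ q ih =>
      obtain ⟨e1, e2⟩ := key q
      rw [e1, e2]
      linear_combination ((2 * k + 1) ^ 2 - 4 * k0 * (k + 1) * k1 ^ 2) * ih
        + 4 * (k + 1) * hk
  -- addition formulas
  have add : ∀ p m, s (m + p) = tk k p * s m + tk k m * s p ∧
      tk k (m + p) = tk k m * tk k p + k0 * (k + 1) * s m * s p := by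
    intro p
    induction p with
    | zero =>
      intro m
      constructor
      · rw [tk_zero, hs0]; ring_nf
      · rw [tk_zero, hs0]; ring_nf
    | succ q ih =>
      intro m
      obtain ⟨a1, a2⟩ := ih m
      obtain ⟨b1, b2⟩ := key q
      constructor
      · rw [show m + (q + 1) = m + q + 1 by omega, (key (m + q)).1, a1, a2, b1, b2]; ring
      · rw [show m + (q + 1) = m + q + 1 by omega, (key (m + q)).2, a1, a2, b1, b2]; ring
  -- shift identity
  have shift : ∀ d m, s (m + 2 * d) = 2 * tk k d * s (m + d) - s m := by
    intro d m
    have h1 := (add d m).1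
    have h3 := (add d m).2
    have h2 := (add d (m + d)).1
    rw [show m + d + d = m + 2 * d by omega] at h2
    have hp := pell d
    rw [h2, h1, h3]
    linear_combination (-(s m)) * hp
  -- positivity and growth of s
  have sgrow : ∀ p, 0 ≤ s p ∧ (4 * k + 1) * s p ≤ s (p + 1) := by
    intro p
    induction p with
    | zero =>
      constructor
      · rw [hs0]
      · rw [hs0, hs1]; linarith
    | succ q ih =>
      obtain ⟨h1, h2⟩ := ih
      have e : s (q + 2) = (4 * k + 2) * s (q + 1) - s q := hsrec q
      have h4 := mul_nonneg (by linarith : (0:ℤ) ≤ 4 * k + 1) h1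
      have h3 : 0 ≤ s (q + 1) := by linarith
      have h5 := mul_nonneg (by linarith : (0:ℤ) ≤ 4 * k) h1
      exact ⟨h3, by linarith⟩
  have spos : ∀ p, 0 ≤ s p := fun p => (sgrow p).1
  have slow : ∀ p, 2 * k1 * (4 * k + 1) ^ p ≤ s (p + 1) := by
    intro p
    induction p with
    | zero => rw [hs1]; norm_num
    | succ q ih =>
      have h2 := (sgrow (q + 1)).2
      calc 2 * k1 * (4 * k + 1) ^ (q + 1)
          = (4 * k + 1) * (2 * k1 * (4 * k + 1) ^ q) := by ring
        _ ≤ (4 * k + 1) * s (q + 1) :=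
            mul_le_mul_of_nonneg_left ih (by linarith)
        _ ≤ s (q + 1 + 1) := h2
  obtain ⟨ν', rfl⟩ : ∃ ν', ν = ν' + 1 := ⟨ν - 1, by omega⟩
  have hSlow' := slow ν'
  obtain ⟨S, hS⟩ : ∃ S, s (ν' + 1) = S := ⟨_, rfl⟩
  obtain ⟨T, hT⟩ : ∃ T, tk k (ν' + 1) = T := ⟨_, rfl⟩
  have hpell : T ^ 2 - k0 * (k + 1) * S ^ 2 = 1 := by
    rw [← hS, ← hT]; exact pell (ν' + 1)
  have hT2 : T ^ 2 = k0 * (k + 1) * S ^ 2 + 1 := by linarith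
  have hSlow : 2 * k1 * (4 * k + 1) ^ ν' ≤ S := by rw [← hS]; exact hSlow'
  have hSpos2 : (2 : ℤ) ≤ S := S_ge_two k k1 S ν' hk1' hkpos hSlow
  have hSpos : (0 : ℤ) < S := by linarith
  obtain ⟨A, hA⟩ : ∃ A, 4 * c - 2 = A := ⟨_, rfl⟩
  have hAval : A = 4 * k0 * S ^ 2 + 2 := by rw [← hA, hc, hS]; ring
  obtain ⟨B, hB⟩ : ∃ B, 4 * k0 * (k + 1) * S ^ 2 + 2 = B := ⟨_, rfl⟩
  have hBpos : (0 : ℤ) < B := by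
    have h := mul_nonneg (mul_nonneg (by linarith : (0:ℤ) ≤ 4 * k0)
      (by linarith : (0:ℤ) ≤ k + 1)) (sq_nonneg S)
    linarith [hB]
  -- values at small multiples of ν
  have sν2 : s (2 * (ν' + 1)) = 2 * T * S := by
    have h := shift (ν' + 1) 0
    rw [show 0 + 2 * (ν' + 1) = 2 * (ν' + 1) by omega,
      show 0 + (ν' + 1) = ν' + 1 by omega, hs0, hS, hT] at h
    rw [h]; ring
  have sν3 : s (3 * (ν' + 1)) = (B + 1) * S := by
    have h := shift (ν' + 1) (ν' + 1)
    rw [show ν' + 1 + 2 * (ν' + 1) = 3 * (ν' + 1) by omega,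
      show ν' + 1 + (ν' + 1) = 2 * (ν' + 1) by omega, sν2, hS, hT] at h
    rw [h, ← hB]
    linear_combination (4 * S) * hT2
  have t2ν : tk k (2 * (ν' + 1)) = 2 * T ^ 2 - 1 := by
    have h := (add (ν' + 1) (ν' + 1)).2
    rw [show ν' + 1 + (ν' + 1) = 2 * (ν' + 1) by omega, hS, hT] at h
    rw [h]
    linear_combination (-1 : ℤ) * hpell
  -- recurrence for the subsequence
  have aRec : ∀ j : ℕ, s ((2 * j + 5) * (ν' + 1)) =
      B * s ((2 * j + 3) * (ν' + 1)) - s ((2 * j + 1) * (ν' + 1)) := by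
    intro j
    have h := shift (2 * (ν' + 1)) ((2 * j + 1) * (ν' + 1))
    rw [show (2 * j + 1) * (ν' + 1) + 2 * (2 * (ν' + 1)) = (2 * j + 5) * (ν' + 1) by ring,
      show (2 * j + 1) * (ν' + 1) + 2 * (ν' + 1) = (2 * j + 3) * (ν' + 1) by ring, t2ν] at h
    rw [h, ← hB]
    linear_combination (4 * s ((2 * j + 3) * (ν' + 1))) * hT2
  have abound : ∀ j, s ((2 * j + 3) * (ν' + 1)) ≤ B ^ j * s (3 * (ν' + 1)) := by
    intro j
    induction j with
    | zero => norm_num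
    | succ i ih =>
      have h := aRec i
      have hnn := spos ((2 * i + 1) * (ν' + 1))
      calc s ((2 * (i + 1) + 3) * (ν' + 1))
          = s ((2 * i + 5) * (ν' + 1)) := by rw [show 2 * (i + 1) + 3 = 2 * i + 5 by omega]
        _ = B * s ((2 * i + 3) * (ν' + 1)) - s ((2 * i + 1) * (ν' + 1)) := h
        _ ≤ B * s ((2 * i + 3) * (ν' + 1)) := by linarith
        _ ≤ B * (B ^ i * s (3 * (ν' + 1))) :=
            mul_le_mul_of_nonneg_left ih (le_of_lt hBpos)
        _ = B ^ (i + 1) * s (3 * (ν' + 1)) := by ring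
  -- w side
  have hA6 : (6 : ℤ) ≤ A := A_ge_six k0 S A hAval hk0' hSpos2
  have wmono : ∀ m, 0 ≤ w m ∧ w m ≤ w (m + 1) := by
    intro m
    induction m with
    | zero =>
      rw [hw0, hw1, hS]
      refine ⟨le_refl 0, ?_⟩
      have := mul_pos (mul_pos (by norm_num : (0:ℤ) < 2) hSpos) hr
      linarith
    | succ q ih =>
      obtain ⟨h1, h2⟩ := ih
      have e := hwrec q
      rw [hA] at e
      have h3 : 0 ≤ w (q + 1) := le_trans h1 h2
      have h4 := mul_nonneg (by linarith : (0:ℤ) ≤ A - 2) h3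
      exact ⟨h3, by linarith⟩
  have wbound : ∀ j, (A - 1) ^ j * w 2 ≤ w (j + 2) := by
    intro j
    induction j with
    | zero => norm_num
    | succ i ih =>
      have e := hwrec (i + 1)
      rw [hA] at e
      have hm := (wmono (i + 1)).2
      have h1 : (A - 1) * w (i + 2) ≤ w (i + 1 + 2) := by linarith
      calc (A - 1) ^ (i + 1) * w 2 = (A - 1) * ((A - 1) ^ i * w 2) := by ring
        _ ≤ (A - 1) * w (i + 2) := mul_le_mul_of_nonneg_left ih (by linarith)
        _ ≤ w (i + 1 + 2) := h1
  have w2 : w 2 = A * (2 * S * r) := by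
    have e0 := hwrec 0
    rw [hA] at e0
    norm_num at e0
    rw [e0, hw0, hw1, hS]
    ring
  -- decompose n
  obtain ⟨m, rfl⟩ : ∃ m, n = m + 2 := ⟨n - 2, by omega⟩
  have hνn : m + 1 ≤ ν' := by
    rcases hcase with ⟨h1, h2, _⟩ | ⟨h1, h2, _⟩ | ⟨h1, h2, _⟩ <;> omega
  have hr2 : 4 * r ^ 2 = 4 * k0 * S ^ 2 + 4 - 4 * k := by
    have h := hcr
    rw [hc, hS] at h
    linarith
  have h2r : (k + 1) ^ (m + 1) < 2 * r :=
    core_ineq k0 k1 k S r m ν' hk0' hk1' hk hkpos hSlow hr hr2 hνn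
  have main : B ^ m * ((B + 1) * S) < (A - 1) ^ m * (A * (2 * S * r)) :=
    final_ineq k0 k S r A B m hkpos hk0' hSpos2 hAval (hB.symm) h2r
  -- final chain
  calc s ((2 * (m + 2) - 1) * (ν' + 1))
      = s ((2 * m + 3) * (ν' + 1)) := by rw [show 2 * (m + 2) - 1 = 2 * m + 3 by omega]
    _ ≤ B ^ m * s (3 * (ν' + 1)) := abound m
    _ = B ^ m * ((B + 1) * S) := by rw [sν3]
    _ < (A - 1) ^ m * (A * (2 * S * r)) := main
    _ = (A - 1) ^ m * w 2 := by rw [w2]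
    _ ≤ w (m + 2) := wbound m
end

section
/- Suppose s_m = w_n for nonnegative integers m, n with n ≥ 1 and ν | m. Then: (1) if ν = 7 and k ≥ 12, then n ≥ 8; (2) if either ν = 8 and k ≥ 15, or ν ≥ 9 and k ≥ 7, then n ≥ 9. -/
set_option maxHeartbeats 2000000


theorem stmt_8 (k0 k1 k : ℤ) (hk0 : 0 < k0) (hk1 : 0 < k1)
    (hk0sf : Squarefree k0) (hk : k = k0 * k1 ^ 2)
    (s : ℕ → ℤ) (hs0 : s 0 = 0) (hs1 : s 1 = 2 * k1)
    (hsrec : ∀ ν, s (ν + 2) = (4 * k + 2) * s (ν + 1) - s ν)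
    (ν : ℕ) (hν : 1 ≤ ν) (c r : ℤ)
    (hc : c = k0 * (s ν) ^ 2 + 1) (hr : 0 < r) (hcr : c - k = r ^ 2)
    (w : ℕ → ℤ) (hw0 : w 0 = 0) (hw1 : w 1 = 2 * s ν * r)
    (hwrec : ∀ n, w (n + 2) = (4 * c - 2) * w (n + 1) - w n)
    (m n : ℕ) (hmn : s m = w n) (hn1 : 1 ≤ n) (hdvd : ν ∣ m) :
    (ν = 7 → 12 ≤ k → 8 ≤ n) ∧
    ((ν = 8 ∧ 15 ≤ k) ∨ (9 ≤ ν ∧ 7 ≤ k) → 9 ≤ n) := by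
  obtain ⟨μ, rfl⟩ : ∃ μ, ν = μ + 1 := ⟨ν - 1, by omega⟩
  have hse : ∀ a b : ℕ, a = b → s a = s b := fun a b h => congrArg s h
  have hk1' : (1:ℤ) ≤ k1 := hk1
  have hk0' : (1:ℤ) ≤ k0 := hk0
  have hk1sq : (1:ℤ) ≤ k1^2 := by nlinarith [sq_nonneg (k1-1)]
  have hkpos : (1:ℤ) ≤ k := by
    rw [hk]
    nlinarith [mul_nonneg (by linarith : (0:ℤ) ≤ k0 - 1) (sq_nonneg k1), sq_nonneg (k1-1)]
  -- basic monotonicity of s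
  have hmono : ∀ i, 0 ≤ s i ∧ s i < s (i+1) := by
    intro i
    induction i with
    | zero =>
      rw [hs0, hs1]; exact ⟨le_refl 0, by linarith⟩
    | succ i ih =>
      obtain ⟨h0, h1⟩ := ih
      refine ⟨by linarith, ?_⟩
      have h := hsrec i
      nlinarith [mul_nonneg (by linarith : (0:ℤ) ≤ k) (by linarith : (0:ℤ) ≤ s (i+1))]
  have smono : StrictMono s := strictMono_nat_of_lt_succ (fun i => (hmono i).2)
  have hsnn : ∀ i, 0 ≤ s i := fun i => (hmono i).1
  have hspos : ∀ i, 0 < s (i+1) := fun i => lt_of_le_of_lt (hmono i).1 (hmono i).2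
  have hsle : ∀ i, s i ≤ s (i+1) := fun i => le_of_lt (hmono i).2
  have hSpos : 0 < s (μ+1) := hspos μ
  have hS2 : 2*k1 ≤ s (μ+1) := by
    have h : s 1 ≤ s (μ+1) := smono.monotone (by omega)
    rw [hs1] at h; linarith
  have hSS : 4*k1^2 ≤ (s (μ+1))^2 := by
    nlinarith [mul_nonneg (show (0:ℤ) ≤ s (μ+1) - 2*k1 by linarith)
      (show (0:ℤ) ≤ s (μ+1) + 2*k1 by linarith)]
  have hSlow : ∀ i, 2*k1*(4*k+1)^i ≤ s (i+1) := by
    intro i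
    induction i with
    | zero => rw [pow_zero, mul_one, hs1]
    | succ i ih =>
      have h := hsrec i
      have h2 : (4*k+1) * s (i+1) ≤ s (i+2) := by nlinarith [hsle i]
      calc 2*k1*(4*k+1)^(i+1) = (4*k+1) * (2*k1*(4*k+1)^i) := by ring
        _ ≤ (4*k+1) * s (i+1) := by
            apply mul_le_mul_of_nonneg_left ih (by linarith)
        _ ≤ s (i+2) := h2
  -- the quadratic invariant
  have hG : ∀ i, s (i+1)^2 + s i^2 - (4*k+2) * s (i+1) * s i = 4*k1^2 := by
    intro i
    induction i with
    | zero => rw [hs0, hs1]; ring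
    | succ i ih =>
      rw [hsrec i]
      linear_combination ih
  have hcat : ∀ i, s (i+2) * s i = s (i+1)^2 - 4*k1^2 := by
    intro i
    rw [hsrec i]
    linear_combination - hG i
  -- bilinear addition formula
  have hbil : ∀ j i, 2*k1 * s (i + j + 1) = s (i+1) * s (j+1) - s i * s j := by
    intro j
    have H : ∀ i, (2*k1 * s (i + j + 1) = s (i+1) * s (j+1) - s i * s j) ∧
        (2*k1 * s (i + j + 2) = s (i+2) * s (j+1) - s (i+1) * s j) := by
      intro i
      induction i with
      | zero =>
        constructor
        · rw [hse (0 + j + 1) (j+1) (by omega), hs0, hs1]; ring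
        · rw [hse (0 + j + 2) (j+2) (by omega), hsrec j, hsrec 0, hs0, hs1]; ring
      | succ i ih =>
        obtain ⟨ih1, ih2⟩ := ih
        rw [hse (i + j + 2) (i + 1 + j + 1) (by omega)] at ih2
        constructor
        · exact ih2
        · rw [hse (i + 1 + j + 2) ((i + j + 1) + 2) (by omega), hsrec (i+j+1),
            hsrec (i+1), hse ((i + j + 1) + 1) (i + 1 + j + 1) (by omega)]
          linear_combination (4*k+2) * ih2 - ih1 + s j * hsrec i
    exact fun i => (H i).1
  -- three-term identity with step ν
  have htri : ∀ i, 2*k1 * s (i + 2*(μ+1)) =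
      (s (μ+2) - s μ) * s (i + (μ+1)) - 2*k1 * s i := by
    have H : ∀ i, (2*k1 * s (i + 2*(μ+1)) =
        (s (μ+2) - s μ) * s (i + (μ+1)) - 2*k1 * s i) ∧
        (2*k1 * s (i + 1 + 2*(μ+1)) =
        (s (μ+2) - s μ) * s (i + 1 + (μ+1)) - 2*k1 * s (i+1)) := by
      intro i
      induction i with
      | zero =>
        constructor
        · have hb := hbil μ (μ+1)
          rw [hse (μ + 1 + μ + 1) (0 + 2*(μ+1)) (by omega)] at hb
          rw [hse (0 + (μ+1)) (μ+1) (by omega), hs0]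
          linear_combination hb
        · have hb := hbil μ (μ+2)
          rw [hse (μ + 2 + μ + 1) (0 + 1 + 2*(μ+1)) (by omega)] at hb
          have hcc := hcat (μ+1)
          rw [hse (0 + 1 + (μ+1)) (μ+2) (by omega), hs1]
          linear_combination hb + hcc
      | succ i ih =>
        obtain ⟨ih1, ih2⟩ := ih
        constructor
        · exact ih2
        · rw [hse (i + 1 + 1 + 2*(μ+1)) ((i + 2*(μ+1)) + 2) (by omega),
            hsrec (i + 2*(μ+1)),
            hse (i + 1 + 1 + (μ+1)) ((i + (μ+1)) + 2) (by omega),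
            hsrec (i + (μ+1)), hsrec i,
            hse ((i + 2*(μ+1)) + 1) (i + 1 + 2*(μ+1)) (by omega),
            hse ((i + (μ+1)) + 1) (i + 1 + (μ+1)) (by omega)]
          linear_combination (4*k+2) * ih2 - ih1
    exact fun i => (H i).1
  have hrec2 : ∀ t, 2*k1 * s ((t+2)*(μ+1)) =
      (s (μ+2) - s μ) * s ((t+1)*(μ+1)) - 2*k1 * s (t*(μ+1)) := by
    intro t
    have h := htri (t*(μ+1))
    rw [hse (t*(μ+1) + 2*(μ+1)) ((t+2)*(μ+1)) (by ring),
      hse (t*(μ+1) + (μ+1)) ((t+1)*(μ+1)) (by ring)] at h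
    exact h
  have hDpos : 0 < s (μ+2) - s μ := by
    have h1 := (hmono μ).2
    have h2 := (hmono (μ+1)).2
    linarith
  have hD2 : (s (μ+2) - s μ)^2 = 16*k1^2 + 16*k*(k+1)*(s (μ+1))^2 := by
    rw [hsrec μ]
    linear_combination 4 * hG μ
  -- c and r facts
  have hr2 : r^2 = k0 * (s (μ+1))^2 + 1 - k := by linear_combination - hcr + hc
  have hck : k1^2 * c = k*(s (μ+1))^2 + k1^2 := by rw [hc, hk]; ring
  have hckk : k1^2 * (k*c) = k*(k*(s (μ+1))^2 + k1^2) := by rw [hc, hk]; ring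
  have hkk4 : 4*k ≤ k0*(s (μ+1))^2 := by
    nlinarith [mul_nonneg (by linarith : (0:ℤ) ≤ k0)
      (show (0:ℤ) ≤ (s (μ+1))^2 - 4*k1^2 by linarith), hk]
  have hc2 : (2:ℤ) ≤ c := by
    rw [hc]
    nlinarith [mul_nonneg (by linarith : (0:ℤ) ≤ k0 - 1) (sq_nonneg (s (μ+1))),
      hSS, sq_nonneg (k1-1)]
  -- w basic facts
  have hwpos : ∀ i, 0 ≤ w i ∧ w i < w (i+1) := by
    intro i
    induction i with
    | zero =>
      rw [hw0, hw1]
      exact ⟨le_refl 0, by positivity⟩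
    | succ i ih =>
      obtain ⟨h0, h1⟩ := ih
      refine ⟨by linarith, ?_⟩
      have h := hwrec i
      nlinarith [mul_nonneg (by linarith : (0:ℤ) ≤ 4*c - 4) (by linarith : (0:ℤ) ≤ w (i+1))]
  have hwup : ∀ i, w (i+2) ≤ (4*c-2) * w (i+1) := by
    intro i
    have h := hwrec i
    linarith [(hwpos i).1]
  have hwlo : ∀ i, (4*c-3) * w (i+1) ≤ w (i+2) := by
    intro i
    have h := hwrec i
    linarith [(hwpos i).2]
  -- the key bound: any solution forces s ν ≤ (k+1)^(n-1)
  have key : 2 ≤ k → s (μ+1) ≤ (k+1)^(n-1) := by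
    intro hk2
    -- upper window : w (nn+1) < s ((2nn+2) ν)
    have hF2 : ∀ nn, w (nn+1) < s ((2*nn+2)*(μ+1)) := by
      intro nn
      induction nn with
      | zero =>
        have ha2 : 2*k1 * s (2*(μ+1)) = (s (μ+2) - s μ) * s (μ+1) := by
          have h := hrec2 0
          rw [hse ((0+2)*(μ+1)) (2*(μ+1)) (by ring), hse ((0+1)*(μ+1)) (μ+1) (by ring),
            hse (0*(μ+1)) 0 (by ring), hs0] at h
          linarith
        have hDr : (s (μ+2) - s μ)^2 - (4*k1*r)^2 = 16*k^2*(s (μ+1))^2 + 16*k1^2*k := by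
          linear_combination hD2 - 16*k1^2 * hr2 + (16*(s (μ+1))^2) * hk
        have h1 : 0 < (s (μ+2) - s μ)^2 - (4*k1*r)^2 := by
          nlinarith [sq_nonneg (k * s (μ+1)),
            mul_pos (show (0:ℤ) < k1^2 by positivity) (show (0:ℤ) < k by linarith)]
        have hlt : 4*k1*r < s (μ+2) - s μ := by
          nlinarith [mul_pos (mul_pos (by linarith : (0:ℤ) < 4*k1) hr) hDpos,
            mul_pos hr (by linarith : (0:ℤ) < k1)]
        have h3 : 2*k1 * w 1 < 2*k1 * s (2*(μ+1)) := by
          rw [hw1, ha2]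
          nlinarith [mul_lt_mul_of_pos_right hlt hSpos]
        have h4 : w 1 < s (2*(μ+1)) := lt_of_mul_lt_mul_left h3 (by linarith)
        rw [hse ((2*0+2)*(μ+1)) (2*(μ+1)) (by ring)]
        exact h4
      | succ nn ih =>
        rw [hse ((2*(nn+1)+2)*(μ+1)) ((2*nn+4)*(μ+1)) (by ring)]
        have e1 := hrec2 (2*nn+1)
        rw [hse ((2*nn+1+2)*(μ+1)) ((2*nn+3)*(μ+1)) (by ring),
          hse ((2*nn+1+1)*(μ+1)) ((2*nn+2)*(μ+1)) (by ring)] at e1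
        have e2 := hrec2 (2*nn+2)
        rw [hse ((2*nn+2+2)*(μ+1)) ((2*nn+4)*(μ+1)) (by ring),
          hse ((2*nn+2+1)*(μ+1)) ((2*nn+3)*(μ+1)) (by ring)] at e2
        have hm1 : s ((2*nn+1)*(μ+1)) ≤ s ((2*nn+2)*(μ+1)) :=
          smono.monotone (Nat.mul_le_mul (by omega) (le_refl (μ+1)))
        have hXpos : 0 < s ((2*nn+2)*(μ+1)) := by
          have h := smono (show (0:ℕ) < (2*nn+2)*(μ+1) from by positivity)
          rw [hs0] at h; exact h
        have hkS : (s (μ+1))^2 ≤ k*(s (μ+1))^2 := by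
          linarith [mul_nonneg (by linarith : (0:ℤ) ≤ k - 1) (sq_nonneg (s (μ+1)))]
        have hkS2 : k*(s (μ+1))^2 ≤ k^2*(s (μ+1))^2 := by
          linarith [mul_nonneg (mul_nonneg (show (0:ℤ) ≤ k by linarith)
            (show (0:ℤ) ≤ k - 1 by linarith)) (sq_nonneg (s (μ+1)))]
        have hcond : 4*k1^2*(4*c-2) + 2*k1*(s (μ+2) - s μ) + 4*k1^2 ≤ (s (μ+2) - s μ)^2 := by
          linarith [hD2, hck, sq_nonneg (s (μ+2) - s μ - 4*k1), hSS, hkS, hkS2, hk1sq]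
        have t1 : (s (μ+2) - s μ) * s ((2*nn+2)*(μ+1)) - 2*k1 * s ((2*nn+2)*(μ+1))
            ≤ 2*k1 * s ((2*nn+3)*(μ+1)) := by
          linarith [e1, mul_le_mul_of_nonneg_left hm1 (show (0:ℤ) ≤ 2*k1 by linarith)]
        have t2 := mul_le_mul_of_nonneg_left t1 (le_of_lt hDpos)
        have t4 : (s (μ+2) - s μ)^2 * s ((2*nn+2)*(μ+1))
            - 2*k1*(s (μ+2) - s μ) * s ((2*nn+2)*(μ+1)) - 4*k1^2 * s ((2*nn+2)*(μ+1))
            ≤ 4*k1^2 * s ((2*nn+4)*(μ+1)) := by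
          have e2' : 4*k1^2 * s ((2*nn+4)*(μ+1)) =
              2*k1*((s (μ+2) - s μ) * s ((2*nn+3)*(μ+1))) - 4*k1^2 * s ((2*nn+2)*(μ+1)) := by
            linear_combination 2*k1 * e2
          linarith [t2, e2']
        have t5 : 4*k1^2*((4*c-2) * s ((2*nn+2)*(μ+1)))
            ≤ 4*k1^2 * s ((2*nn+4)*(μ+1)) := by
          linarith [t4, mul_le_mul_of_nonneg_right hcond (le_of_lt hXpos)]
        have t6 : (4*c-2) * s ((2*nn+2)*(μ+1)) ≤ s ((2*nn+4)*(μ+1)) :=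
          le_of_mul_le_mul_left t5 (by positivity)
        have h6 : (4*c-2) * w (nn+1) < (4*c-2) * s ((2*nn+2)*(μ+1)) :=
          mul_lt_mul_of_pos_left ih (by linarith)
        calc w (nn+1+1) ≤ (4*c-2) * w (nn+1) := hwup nn
          _ < (4*c-2) * s ((2*nn+2)*(μ+1)) := h6
          _ ≤ s ((2*nn+4)*(μ+1)) := t6
    -- lower window with drift
    have hF3 : ∀ nn, s (μ+1) * s ((2*nn+1)*(μ+1)) ≤ (k+1)^nn * w (nn+1) := by
      intro nn
      induction nn with
      | zero =>
        rw [hse ((2*0+1)*(μ+1)) (μ+1) (by ring), pow_zero, one_mul, hw1]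
        have hS2r : s (μ+1) ≤ 2*r := by
          nlinarith [hr2, hkk4, hSS, hr, hSpos,
            mul_nonneg (by linarith : (0:ℤ) ≤ k0 - 1) (sq_nonneg (s (μ+1)))]
        nlinarith [mul_le_mul_of_nonneg_left hS2r (le_of_lt hSpos)]
      | succ nn ih =>
        rw [hse ((2*(nn+1)+1)*(μ+1)) ((2*nn+3)*(μ+1)) (by ring), pow_succ]
        have e1 := hrec2 (2*nn)
        rw [hse ((2*nn+2)*(μ+1)) ((2*nn+2)*(μ+1)) (by ring),
          hse ((2*nn+0+1)*(μ+1)) ((2*nn+1)*(μ+1)) (by ring)] at e1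
        have e2 := hrec2 (2*nn+1)
        rw [hse ((2*nn+1+2)*(μ+1)) ((2*nn+3)*(μ+1)) (by ring),
          hse ((2*nn+1+1)*(μ+1)) ((2*nn+2)*(μ+1)) (by ring)] at e2
        have u1 : 2*k1* s ((2*nn+2)*(μ+1)) ≤ (s (μ+2) - s μ) * s ((2*nn+1)*(μ+1)) := by
          have h0 := hsnn ((2*nn)*(μ+1))
          have e1' := hrec2 (2*nn)
          rw [hse ((2*nn+1)*(μ+1)) ((2*nn+1)*(μ+1)) (by ring)] at e1'
          linarith [e1', mul_nonneg (show (0:ℤ) ≤ 2*k1 by linarith) h0]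
        have u2 := mul_le_mul_of_nonneg_left u1 (le_of_lt hDpos)
        have u3 : 4*k1^2 * s ((2*nn+3)*(μ+1)) ≤
            ((s (μ+2) - s μ)^2 - 4*k1^2) * s ((2*nn+1)*(μ+1)) := by
          have e2' : 4*k1^2 * s ((2*nn+3)*(μ+1)) =
              2*k1*((s (μ+2) - s μ) * s ((2*nn+2)*(μ+1))) - 4*k1^2 * s ((2*nn+1)*(μ+1)) := by
            linear_combination 2*k1 * e2
          linarith [u2, e2']
        have u4 := mul_le_mul_of_nonneg_left u3 (le_of_lt hSpos)
        have hDsq : (0:ℤ) ≤ (s (μ+2) - s μ)^2 - 4*k1^2 := by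
          linarith [hD2, mul_nonneg (mul_nonneg (show (0:ℤ) ≤ k by linarith)
            (show (0:ℤ) ≤ k+1 by linarith)) (sq_nonneg (s (μ+1))), sq_nonneg k1]
        have u6 := mul_le_mul_of_nonneg_left ih hDsq
        have hcond3 : (s (μ+2) - s μ)^2 - 4*k1^2 ≤ 4*k1^2*(k+1)*(4*c-3) := by
          linarith [hD2, hck, hckk,
            mul_nonneg (show (0:ℤ) ≤ k-2 by linarith) (sq_nonneg k1)]
        have hwn1 : (0:ℤ) ≤ w (nn+1) := (hwpos (nn+1)).1
        have hpow : (0:ℤ) ≤ (k+1)^nn := by positivity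
        have u7 := mul_le_mul_of_nonneg_right hcond3 (mul_nonneg hpow hwn1)
        have u8 := hwlo nn
        have u9 := mul_le_mul_of_nonneg_left u8
          (show (0:ℤ) ≤ 4*k1^2*((k+1)^nn * (k+1)) by positivity)
        have u10 : 4*k1^2 * (s (μ+1) * s ((2*nn+3)*(μ+1)))
            ≤ 4*k1^2 * ((k+1)^nn * (k+1) * w (nn+1+1)) := by linarith [u4, u6, u7, u9]
        have := le_of_mul_le_mul_left u10 (show (0:ℤ) < 4*k1^2 by positivity)
        linarith
    -- assemble
    obtain ⟨n', rfl⟩ : ∃ n', n = n' + 1 := ⟨n - 1, by omega⟩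
    obtain ⟨t, rfl⟩ := hdvd
    have hwn : 0 < w (n'+1) := by
      have h := (hwpos 0).2
      have h2 : w 1 ≤ w (n'+1) := by
        have : ∀ i, w 1 ≤ w (i+1) := by
          intro i
          induction i with
          | zero => exact le_refl _
          | succ i ih => exact le_trans ih (le_of_lt (hwpos (i+1)).2)
        exact this n'
      rw [hw0] at h; linarith
    have ht1 : 1 ≤ t := by
      by_contra h
      have : t = 0 := by omega
      subst this
      rw [Nat.mul_zero, hs0] at hmn
      linarith
    have hlt : (μ+1)*t < (2*n'+2)*(μ+1) := by
      apply smono.lt_iff_lt.mp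
      rw [hmn]
      exact hF2 n'
    have ht2 : t ≤ 2*n'+1 := by
      have h : (μ+1)*t < (μ+1)*(2*n'+2) := by
        calc (μ+1)*t < (2*n'+2)*(μ+1) := hlt
          _ = (μ+1)*(2*n'+2) := by ring
      have := Nat.lt_of_mul_lt_mul_left h
      omega
    have hsm : s ((μ+1)*t) ≤ s ((2*n'+1)*(μ+1)) := by
      apply smono.monotone
      calc (μ+1)*t ≤ (μ+1)*(2*n'+1) := Nat.mul_le_mul (le_refl _) ht2
        _ = (2*n'+1)*(μ+1) := by ring
    have hXpos : 0 < s ((2*n'+1)*(μ+1)) := by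
      have h := smono (show (0:ℕ) < (2*n'+1)*(μ+1) from by positivity)
      rw [hs0] at h; exact h
    have h3 := hF3 n'
    have h4 : (k+1)^n' * w (n'+1) ≤ (k+1)^n' * s ((2*n'+1)*(μ+1)) := by
      apply mul_le_mul_of_nonneg_left _ (by positivity)
      rw [← hmn]; exact hsm
    have h5 : s (μ+1) * s ((2*n'+1)*(μ+1)) ≤ (k+1)^n' * s ((2*n'+1)*(μ+1)) :=
      le_trans h3 h4
    have h6 : s (μ+1) ≤ (k+1)^n' := le_of_mul_le_mul_right
      (by calc s (μ+1) * s ((2*n'+1)*(μ+1)) ≤ (k+1)^n' * s ((2*n'+1)*(μ+1)) := h5) hXpos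
    simpa using h6
  -- final case analysis
  constructor
  · intro h7 h12
    by_contra hn8
    have hk2 : (2:ℤ) ≤ k := by linarith
    have hkey := key hk2
    have hμ6 : μ = 6 := by omega
    subst hμ6
    have hpow : ((k:ℤ)+1)^(n-1) ≤ (k+1)^6 :=
      pow_le_pow_right₀ (by linarith) (by omega)
    have hlow := hSlow 6
    have h2 : ((k:ℤ)+1)^6 ≤ (4*k+1)^6 := pow_le_pow_left₀ (by linarith) (by linarith) 6
    have h3 : (0:ℤ) < (4*k+1)^6 := by positivity
    linarith [hkey, hpow, hlow, h2, h3,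
      mul_nonneg (show (0:ℤ) ≤ k1 - 1 by linarith) (le_of_lt h3)]
  · intro hcase
    by_contra hn9
    rcases hcase with ⟨h8, h15⟩ | ⟨h9, h7⟩
    · have hk2 : (2:ℤ) ≤ k := by linarith
      have hkey := key hk2
      have hμ7 : μ = 7 := by omega
      subst hμ7
      have hpow : ((k:ℤ)+1)^(n-1) ≤ (k+1)^7 :=
        pow_le_pow_right₀ (by linarith) (by omega)
      have hlow := hSlow 7
      have h2 : ((k:ℤ)+1)^7 ≤ (4*k+1)^7 := pow_le_pow_left₀ (by linarith) (by linarith) 7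
      have h3 : (0:ℤ) < (4*k+1)^7 := by positivity
      linarith [hkey, hpow, hlow, h2, h3,
        mul_nonneg (show (0:ℤ) ≤ k1 - 1 by linarith) (le_of_lt h3)]
    · have hk2 : (2:ℤ) ≤ k := by linarith
      have hkey := key hk2
      have hpow : ((k:ℤ)+1)^(n-1) ≤ (k+1)^7 :=
        pow_le_pow_right₀ (by linarith) (by omega)
      have hlow := hSlow μ
      have h2 : ((k:ℤ)+1)^7 ≤ (4*k+1)^7 := pow_le_pow_left₀ (by linarith) (by linarith) 7
      have h3 : ((4*k+1):ℤ)^7 ≤ (4*k+1)^μ := pow_le_pow_right₀ (by linarith) (by omega)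
      have h4 : (0:ℤ) < (4*k+1)^μ := by positivity
      linarith [hkey, hpow, hlow, h2, h3, h4,
        mul_nonneg (show (0:ℤ) ≤ k1 - 1 by linarith) (le_of_lt h4)]
end

section
/- Let k ≥ 3 and let c, d, s, t, x, y, z be positive integers with c > k, d > c, c − 1 = k0·s^2, (k+1)c − k = t^2, d − 1 = k0·x^2, (k+1)d − k = y^2 and cd − k = z^2. Set θ1 = sqrt(1 − 1/c) and θ2 = sqrt(1 − k/((k+1)c)). Then |θ1 − k0·s·x/z| < 1/(2·k0·x^2) and |θ2 − t·y/((k+1)·z)| < 1/(2·k0·x^2). -/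
set_option maxHeartbeats 1000000

private lemma aux1 (K C D : ℝ) (hK : 3 ≤ K) (hKC : K + 1 ≤ C) (hCD : C + 1 ≤ D) :
    (C-1)*(C-K)^2*(D-1) < C^2*(C*D-K) := by
  have hC : (0:ℝ) < C := by linarith
  have hd1 : (0:ℝ) < D - 1 := by linarith
  have hc1 : (0:ℝ) < C - 1 := by linarith
  have h1a : (C-K)^2 ≤ (C-1)^2 := by nlinarith
  calc (C-1)*(C-K)^2*(D-1) ≤ (C-1)*(C-1)^2*(D-1) := by
        nlinarith [mul_nonneg hc1.le hd1.le]
    _ < C^3*(D-1) := by nlinarith [mul_pos (mul_pos hC hC) hC]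
    _ ≤ C^2*(C*D - K) := by nlinarith [mul_pos hC hC]

private lemma aux2 (K C D : ℝ) (hK : 3 ≤ K) (hKC : K + 1 ≤ C) (hCD : C + 1 ≤ D) :
    ((K+1)*C-K)*(K^2*(C-K-1)^2)*(D-1)^2 < (K+1)^2*C^2*((C*D-K)*((K+1)*D-K)) := by
  have hC : (0:ℝ) < C := by linarith
  have hK1 : (0:ℝ) < K + 1 := by linarith
  have hd1 : (0:ℝ) < D - 1 := by linarith
  have hm : 0 ≤ K*(C-K-1) := mul_nonneg (by linarith) (by linarith)
  have hmM : K*(C-K-1) < (K+1)*C := by nlinarith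
  have hm2 : (K*(C-K-1))^2 < ((K+1)*C)^2 := by nlinarith [hm, hmM]
  have hstep2 := mul_lt_mul_of_pos_left hm2
    (show (0:ℝ) < ((K+1)*C)*(D-1)^2 by positivity)
  have hA' : C*(D-1) ≤ C*D-K := by nlinarith
  have hB' : (K+1)*(D-1) ≤ (K+1)*D-K := by nlinarith
  have hprod : (C*(D-1))*((K+1)*(D-1)) ≤ (C*D-K)*((K+1)*D-K) :=
    mul_le_mul hA' hB' (by positivity) (by nlinarith)
  have hprod2 := mul_le_mul_of_nonneg_left hprod
    (show (0:ℝ) ≤ (K+1)^2*C^2 by positivity)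
  calc ((K+1)*C-K)*(K^2*(C-K-1)^2)*(D-1)^2
      ≤ ((K+1)*C)*((K*(C-K-1))^2)*(D-1)^2 := by
        nlinarith [mul_nonneg (mul_nonneg (show (0:ℝ) ≤ K by linarith)
          (sq_nonneg (K*(C-K-1)))) (sq_nonneg (D-1))]
    _ < ((K+1)*C)*(((K+1)*C)^2)*(D-1)^2 := by nlinarith [hstep2]
    _ ≤ (K+1)^2*C^2*((C*D-K)*((K+1)*D-K)) := by nlinarith [hprod2]


theorem stmt_9 (k0 k1 k : ℤ) (hk0 : 0 < k0) (hk1 : 0 < k1)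
    (hk0sf : Squarefree k0) (hk : k = k0 * k1 ^ 2) (hk3 : 3 ≤ k)
    (c d s t x y z : ℤ) (hc : 0 < c) (hd : 0 < d) (hs : 0 < s) (ht : 0 < t)
    (hx : 0 < x) (hy : 0 < y) (hz : 0 < z)
    (hck : k < c) (hdc : c < d)
    (h1 : c - 1 = k0 * s ^ 2) (h2 : (k + 1) * c - k = t ^ 2)
    (h3 : d - 1 = k0 * x ^ 2) (h4 : (k + 1) * d - k = y ^ 2)
    (h5 : c * d - k = z ^ 2)
    (θ1 θ2 : ℝ) (hθ1 : θ1 = Real.sqrt (1 - 1 / (c : ℝ)))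
    (hθ2 : θ2 = Real.sqrt (1 - (k : ℝ) / (((k : ℝ) + 1) * (c : ℝ)))) :
    |θ1 - (k0 : ℝ) * (s : ℝ) * (x : ℝ) / (z : ℝ)| < 1 / (2 * (k0 : ℝ) * (x : ℝ) ^ 2) ∧
    |θ2 - (t : ℝ) * (y : ℝ) / (((k : ℝ) + 1) * (z : ℝ))| < 1 / (2 * (k0 : ℝ) * (x : ℝ) ^ 2) := by
  -- real casts of hypotheses
  have hK : (3:ℝ) ≤ (k:ℝ) := by exact_mod_cast hk3
  have hKC : (k:ℝ) + 1 ≤ (c:ℝ) := by exact_mod_cast hck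
  have hCD : (c:ℝ) + 1 ≤ (d:ℝ) := by exact_mod_cast hdc
  have hK0 : (0:ℝ) < (k0:ℝ) := by exact_mod_cast hk0
  have hC : (0:ℝ) < (c:ℝ) := by exact_mod_cast hc
  have hD : (0:ℝ) < (d:ℝ) := by exact_mod_cast hd
  have hS : (0:ℝ) < (s:ℝ) := by exact_mod_cast hs
  have hT : (0:ℝ) < (t:ℝ) := by exact_mod_cast ht
  have hX : (0:ℝ) < (x:ℝ) := by exact_mod_cast hx
  have hY : (0:ℝ) < (y:ℝ) := by exact_mod_cast hy
  have hZ : (0:ℝ) < (z:ℝ) := by exact_mod_cast hz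
  have e1 : (c:ℝ) - 1 = (k0:ℝ) * (s:ℝ)^2 := by exact_mod_cast h1
  have e2 : ((k:ℝ) + 1) * (c:ℝ) - (k:ℝ) = (t:ℝ)^2 := by exact_mod_cast h2
  have e3 : (d:ℝ) - 1 = (k0:ℝ) * (x:ℝ)^2 := by exact_mod_cast h3
  have e4 : ((k:ℝ) + 1) * (d:ℝ) - (k:ℝ) = (y:ℝ)^2 := by exact_mod_cast h4
  have e5 : (c:ℝ) * (d:ℝ) - (k:ℝ) = (z:ℝ)^2 := by exact_mod_cast h5
  have hε : (0:ℝ) < 1 / (2 * (k0:ℝ) * (x:ℝ)^2) := by positivity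
  have hK1 : (0:ℝ) < (k:ℝ) + 1 := by linarith
  constructor
  · -- part 1
    set a1 : ℝ := (k0:ℝ) * (s:ℝ) * (x:ℝ) / (z:ℝ) with ha1def
    have ha1 : 0 < a1 := by rw [ha1def]; positivity
    have hv : (1:ℝ) - 1 / (c:ℝ) = ((c:ℝ) - 1) / (c:ℝ) := by field_simp
    have hvnn : (0:ℝ) ≤ ((c:ℝ) - 1) / (c:ℝ) := by
      apply div_nonneg _ hC.le; linarith
    have hθ1sq : θ1^2 = ((c:ℝ) - 1) / (c:ℝ) := by
      rw [hθ1, hv]; exact Real.sq_sqrt hvnn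
    have ha1sq : a1^2 = ((c:ℝ)-1) * ((d:ℝ)-1) / (z:ℝ)^2 := by
      rw [ha1def, e1, e3, div_pow]; ring
    have hle : a1 ≤ θ1 := by
      rw [hθ1, hv]
      rw [show a1 = Real.sqrt (a1^2) from (Real.sqrt_sq ha1.le).symm]
      apply Real.sqrt_le_sqrt
      rw [ha1sq, div_le_div_iff₀ (by positivity) hC, ← e5]
      nlinarith
    have key1 : ((c:ℝ)-1)*((c:ℝ)-(k:ℝ))^2*((d:ℝ)-1) < (c:ℝ)^2*((c:ℝ)*(d:ℝ) - (k:ℝ)) := by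
      have := aux1 (k:ℝ) (c:ℝ) (d:ℝ) hK hKC hCD
      linarith [this]
    -- squared strict inequality
    have key1' : (((c:ℝ)-1)*((c:ℝ)-(k:ℝ))*(x:ℝ))^2 < ((c:ℝ)*(z:ℝ)*(s:ℝ))^2 := by
      have h := mul_lt_mul_of_pos_left key1 (show (0:ℝ) < (c:ℝ) - 1 by linarith)
      have hA : ((k0:ℝ)) * ((((c:ℝ)-1)*((c:ℝ)-(k:ℝ))*(x:ℝ))^2)
          = ((c:ℝ)-1) * (((c:ℝ)-1)*((c:ℝ)-(k:ℝ))^2*((d:ℝ)-1)) := by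
        linear_combination (-((c:ℝ)-1)^2*((c:ℝ)-(k:ℝ))^2) * e3
      have hB : ((k0:ℝ)) * (((c:ℝ)*(z:ℝ)*(s:ℝ))^2)
          = ((c:ℝ)-1) * ((c:ℝ)^2*((c:ℝ)*(d:ℝ) - (k:ℝ))) := by
        linear_combination (-((c:ℝ)^2*(z:ℝ)^2)) * e1 - (((c:ℝ)-1)*(c:ℝ)^2) * e5
      have := hA ▸ hB ▸ h
      exact lt_of_mul_lt_mul_left this hK0.le
    have hlt : ((c:ℝ)-1)*((c:ℝ)-(k:ℝ))*(x:ℝ) < (c:ℝ)*(z:ℝ)*(s:ℝ) :=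
      lt_of_pow_lt_pow_left₀ 2 (by positivity) key1'
    have hstep : θ1 - a1 < 1 / (2 * (k0:ℝ) * (x:ℝ)^2) := by
      have hsum : 0 < θ1 + a1 := by linarith
      have heq : θ1 - a1 = (θ1^2 - a1^2) / (θ1 + a1) := by
        rw [eq_div_iff hsum.ne']; ring
      rw [heq]
      have hnum : 0 ≤ θ1^2 - a1^2 := sub_nonneg.2 (pow_le_pow_left₀ ha1.le hle 2)
      have h1' : (θ1^2 - a1^2) / (θ1 + a1) ≤ (θ1^2 - a1^2) / (2*a1) :=
        div_le_div_of_nonneg_left hnum (by linarith) (by linarith)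
      refine lt_of_le_of_lt h1' ?_
      rw [div_lt_iff₀ (by linarith : (0:ℝ) < 2*a1)]
      have hre : 1 / (2 * (k0:ℝ) * (x:ℝ)^2) * (2*a1) = (s:ℝ)/((x:ℝ)*(z:ℝ)) := by
        rw [ha1def]; field_simp
      rw [hre, hθ1sq, ha1sq]
      rw [div_sub_div _ _ hC.ne' (by positivity), div_lt_div_iff₀ (by positivity) (by positivity)]
      calc (((c:ℝ)-1) * (z:ℝ)^2 - (c:ℝ) * (((c:ℝ)-1)*((d:ℝ)-1))) * ((x:ℝ)*(z:ℝ))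
          = (z:ℝ)*(((c:ℝ)-1)*((c:ℝ)-(k:ℝ))*(x:ℝ)) := by
            linear_combination (-(((c:ℝ)-1)*(x:ℝ)*(z:ℝ))) * e5
        _ < (z:ℝ)*((c:ℝ)*(z:ℝ)*(s:ℝ)) := mul_lt_mul_of_pos_left hlt hZ
        _ = (s:ℝ) * ((c:ℝ)*(z:ℝ)^2) := by ring
    rw [abs_lt]
    constructor
    · linarith
    · linarith [hstep]
  · -- part 2
    set a2 : ℝ := (t:ℝ) * (y:ℝ) / (((k:ℝ) + 1) * (z:ℝ)) with ha2def
    have ha2 : 0 < a2 := by rw [ha2def]; positivity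
    have hv : (1:ℝ) - (k:ℝ) / (((k:ℝ)+1)*(c:ℝ)) = (t:ℝ)^2 / (((k:ℝ)+1)*(c:ℝ)) := by
      rw [← e2]; field_simp
    have hθ2sq : θ2^2 = (t:ℝ)^2 / (((k:ℝ)+1)*(c:ℝ)) := by
      rw [hθ2, hv]; exact Real.sq_sqrt (by positivity)
    have ha2sq : a2^2 = (t:ℝ)^2*(y:ℝ)^2 / (((k:ℝ)+1)^2*(z:ℝ)^2) := by
      rw [ha2def, div_pow]; ring_nf
    have hle : a2 ≤ θ2 := by
      rw [hθ2, hv]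
      rw [show a2 = Real.sqrt (a2^2) from (Real.sqrt_sq ha2.le).symm]
      apply Real.sqrt_le_sqrt
      rw [ha2sq, div_le_div_iff₀ (by positivity) (by positivity), ← e5, ← e4]
      have hkey : 0 ≤ (t:ℝ)^2*(((k:ℝ)+1)*((k:ℝ)*((c:ℝ)-(k:ℝ)-1))) := by
        apply mul_nonneg (sq_nonneg _)
        apply mul_nonneg (by linarith)
        apply mul_nonneg (by linarith) (by linarith)
      nlinarith [hkey]
    have key2p : (((k:ℝ)+1)*(c:ℝ)-(k:ℝ))*((k:ℝ)^2*((c:ℝ)-(k:ℝ)-1)^2)*((d:ℝ)-1)^2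
        < ((k:ℝ)+1)^2*(c:ℝ)^2*(((c:ℝ)*(d:ℝ)-(k:ℝ))*(((k:ℝ)+1)*(d:ℝ)-(k:ℝ))) :=
      aux2 (k:ℝ) (c:ℝ) (d:ℝ) hK hKC hCD
    have key2' : ((t:ℝ)*(k:ℝ)*((c:ℝ)-(k:ℝ)-1)*((d:ℝ)-1))^2 < (((k:ℝ)+1)*(c:ℝ)*(z:ℝ)*(y:ℝ))^2 := by
      have hA : ((t:ℝ)*(k:ℝ)*((c:ℝ)-(k:ℝ)-1)*((d:ℝ)-1))^2
          = (((k:ℝ)+1)*(c:ℝ)-(k:ℝ))*((k:ℝ)^2*((c:ℝ)-(k:ℝ)-1)^2)*((d:ℝ)-1)^2 := by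
        linear_combination ((k:ℝ)^2*((c:ℝ)-(k:ℝ)-1)^2*((d:ℝ)-1)^2) * e2.symm
      have hB : (((k:ℝ)+1)*(c:ℝ)*(z:ℝ)*(y:ℝ))^2
          = ((k:ℝ)+1)^2*(c:ℝ)^2*(((c:ℝ)*(d:ℝ)-(k:ℝ))*(((k:ℝ)+1)*(d:ℝ)-(k:ℝ))) := by
        linear_combination (((k:ℝ)+1)^2*(c:ℝ)^2*(y:ℝ)^2) * e5.symm
          + (((k:ℝ)+1)^2*(c:ℝ)^2*((c:ℝ)*(d:ℝ)-(k:ℝ))) * e4.symm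
      rw [hA, hB]; exact key2p
    have key2 : (t:ℝ)*(k:ℝ)*((c:ℝ)-(k:ℝ)-1)*((d:ℝ)-1) < ((k:ℝ)+1)*(c:ℝ)*(z:ℝ)*(y:ℝ) :=
      lt_of_pow_lt_pow_left₀ 2 (by positivity) key2'
    have hstep : θ2 - a2 < 1 / (2 * (k0:ℝ) * (x:ℝ)^2) := by
      have hsum : 0 < θ2 + a2 := by linarith
      have heq : θ2 - a2 = (θ2^2 - a2^2) / (θ2 + a2) := by
        rw [eq_div_iff hsum.ne']; ring
      rw [heq]
      have hnum : 0 ≤ θ2^2 - a2^2 := sub_nonneg.2 (pow_le_pow_left₀ ha2.le hle 2)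
      have h1' : (θ2^2 - a2^2) / (θ2 + a2) ≤ (θ2^2 - a2^2) / (2*a2) :=
        div_le_div_of_nonneg_left hnum (by linarith) (by linarith)
      refine lt_of_le_of_lt h1' ?_
      rw [div_lt_iff₀ (by linarith : (0:ℝ) < 2*a2)]
      have hre : 1 / (2 * (k0:ℝ) * (x:ℝ)^2) * (2*a2)
          = (t:ℝ)*(y:ℝ)/(((k0:ℝ)*(x:ℝ)^2)*(((k:ℝ)+1)*(z:ℝ))) := by
        rw [ha2def]; field_simp
      rw [hre, ← e3, hθ2sq, ha2sq]
      have hd1 : (0:ℝ) < (d:ℝ) - 1 := by linarith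
      rw [div_sub_div _ _ (ne_of_gt (mul_pos hK1 hC))
          (ne_of_gt (mul_pos (pow_pos hK1 2) (pow_pos hZ 2))),
        div_lt_div_iff₀ (mul_pos (mul_pos hK1 hC) (mul_pos (pow_pos hK1 2) (pow_pos hZ 2)))
          (mul_pos hd1 (mul_pos hK1 hZ))]
      calc ((t:ℝ)^2 * (((k:ℝ)+1)^2*(z:ℝ)^2) - ((k:ℝ)+1)*(c:ℝ) * ((t:ℝ)^2*(y:ℝ)^2)) * (((d:ℝ)-1)*(((k:ℝ)+1)*(z:ℝ)))
          = (((k:ℝ)+1)^2*(z:ℝ)*(t:ℝ)) * ((t:ℝ)*(k:ℝ)*((c:ℝ)-(k:ℝ)-1)*((d:ℝ)-1)) := by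
            linear_combination (-(((k:ℝ)+1)^3*(z:ℝ)*((d:ℝ)-1)*(t:ℝ)^2)) * e5
              + (((k:ℝ)+1)^2*(z:ℝ)*((d:ℝ)-1)*(t:ℝ)^2*(c:ℝ)) * e4
        _ < (((k:ℝ)+1)^2*(z:ℝ)*(t:ℝ)) * (((k:ℝ)+1)*(c:ℝ)*(z:ℝ)*(y:ℝ)) :=
            mul_lt_mul_of_pos_left key2 (by positivity)
        _ = (t:ℝ)*(y:ℝ) * (((k:ℝ)+1)*(c:ℝ) * (((k:ℝ)+1)^2*(z:ℝ)^2)) := by ring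
    rw [abs_lt]
    constructor
    · linarith
    · linarith [hstep]
end

section
/- Suppose k ≥ 3, s_m = w_n with m > n ≥ 2, and set P = (2k+1+2·sqrt(k^2+k))^m / sqrt(k+1) and Q = sqrt((c−k)/c)·(2c−1+2·sqrt(c^2−c))^n. Then Q > P and 0 < log(Q/P) < 1.00001·(2c−1+2·sqrt(c^2−c))^{−2n}; equivalently, with α1 = 2c−1+2·sqrt(c^2−c), α2 = 2k+1+2·sqrt(k^2+k), α3 = sqrt((c−k)(k+1)/c), the linear form Λ = n·log α1 − m·log α2 + log α3 satisfies 0 < Λ < 1.00001·α1^{−2n}. -/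
/-!
Both sequences are Lucas sequences whose characteristic roots are the Pell units
`α₂ = 2k+1+2√(k²+k)` and `α₁ = 2c-1+2√(c²-c)`; since `√(k²+k) = k₁√k0√(k+1)` and
`√(c²-c) = s√k0√c`, Binet's formula reads `2√k0 s_j = (α₂^j - α₂^{-j})/√(k+1)` and
`2√k0 w_j = r (α₁^j - α₁^{-j})/√c`. With `A = α₂^m`, `B = α₁^n`, the equation `s_m = w_n` thus
becomes `A - A⁻¹ = α₃ (B - B⁻¹)`, and `Q/P = α₃ B/A = (1 - A⁻²)/(1 - B⁻²)`. As `α₃ > 1` forces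
`A > B`, this ratio lies strictly between `1` and `1/(1 - B⁻²)`, so
`0 < log (Q/P) < B⁻²/(1 - B⁻²)`; finally `B ≥ 49²` because `c ≥ 4k+1 ≥ 13`.
-/

open Real

theorem binet_mul_sub {R : Type*} [CommRing R] {u : ℕ → R} {a b : R} (h0 : u 0 = 0)
    (hrec : ∀ j, u (j + 2) = (a + b) * u (j + 1) - a * b * u j) (j : ℕ) :
    u j * (a - b) = u 1 * (a ^ j - b ^ j) := by
  induction j using Nat.twoStepInduction with
  | zero => simp [h0]
  | one => simp
  | more j ih₀ ih₁ =>
    rw [hrec]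
    linear_combination (a + b) * ih₁ - a * b * ih₀

theorem monotone_of_recurrence {R : Type*} [CommRing R] [LinearOrder R] [IsStrictOrderedRing R]
    {u : ℕ → R} {t : R} (ht : 2 ≤ t) (h0 : u 0 = 0) (h1 : 0 ≤ u 1)
    (hrec : ∀ j, u (j + 2) = t * u (j + 1) - u j) : Monotone u := by
  have key : ∀ j, 0 ≤ u j ∧ u j ≤ u (j + 1) := by
    intro j
    induction j with
    | zero => simpa [h0] using h1
    | succ j ih =>
      have hj : 0 ≤ u (j + 1) := ih.1.trans ih.2
      refine ⟨hj, ?_⟩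
      rw [hrec]
      nlinarith [mul_nonneg (sub_nonneg.2 ht) hj]
  exact monotone_nat_of_le_succ fun j => (key j).2

/-- `(2a+1, 2)` solves `x² - a(a+1) y² = 1`; `pellUnit a` is the larger root of
`X² - (4a+2) X + 1`. -/
noncomputable def pellUnit (a : ℝ) : ℝ := 2 * a + 1 + 2 * √(a ^ 2 + a)

theorem pellUnit_inv {a : ℝ} (ha : 0 ≤ a) :
    (pellUnit a)⁻¹ = 2 * a + 1 - 2 * √(a ^ 2 + a) := by
  refine inv_eq_of_mul_eq_one_right ?_
  have := Real.sq_sqrt (by positivity : 0 ≤ a ^ 2 + a)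
  unfold pellUnit
  linear_combination -4 * this

theorem pellUnit_add_inv {a : ℝ} (ha : 0 ≤ a) : pellUnit a + (pellUnit a)⁻¹ = 4 * a + 2 := by
  rw [pellUnit_inv ha, pellUnit]; ring

theorem pellUnit_sub_inv {a : ℝ} (ha : 0 ≤ a) :
    pellUnit a - (pellUnit a)⁻¹ = 4 * √a * √(a + 1) := by
  rw [pellUnit_inv ha, pellUnit, show a ^ 2 + a = a * (a + 1) by ring, sqrt_mul ha]; ring

theorem four_mul_add_one_le_pellUnit {a : ℝ} (ha : 0 ≤ a) : 4 * a + 1 ≤ pellUnit a := by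
  have : a ≤ √(a ^ 2 + a) := (le_sqrt ha (by positivity)).2 (by linarith)
  unfold pellUnit; linarith

theorem pellUnit_pos {a : ℝ} (ha : 0 ≤ a) : 0 < pellUnit a := by
  linarith [four_mul_add_one_le_pellUnit ha]

theorem pell_closed_form {k0 e v : ℝ} (hk0 : 0 ≤ k0) (he : 0 < e) {u : ℕ → ℝ} (h0 : u 0 = 0)
    (h1 : u 1 = 2 * e * v) (hrec : ∀ j, u (j + 2) = (4 * (k0 * e ^ 2) + 2) * u (j + 1) - u j)
    (j : ℕ) :
    2 * √k0 * √(k0 * e ^ 2 + 1) * u j =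
      v * (pellUnit (k0 * e ^ 2) ^ j - (pellUnit (k0 * e ^ 2) ^ j)⁻¹) := by
  have ha : 0 ≤ k0 * e ^ 2 := by positivity
  have hbinet := binet_mul_sub h0 (fun j => by
    rw [pellUnit_add_inv ha, mul_inv_cancel₀ (pellUnit_pos ha).ne', one_mul]; exact hrec j) j
  rw [pellUnit_sub_inv ha, sqrt_mul hk0, sqrt_sq he.le, h1, inv_pow] at hbinet
  refine mul_left_cancel₀ (by positivity : 2 * e ≠ 0) ?_
  linear_combination hbinet

theorem lt_of_sub_inv_eq_mul {A B t : ℝ} (hA : 0 < A) (hB : 1 < B) (ht : 1 < t)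
    (h : A - A⁻¹ = t * (B - B⁻¹)) : B < A := by
  have hB' : 0 < B - B⁻¹ := by linarith [inv_lt_one_of_one_lt₀ hB]
  by_contra! hAB
  have : B⁻¹ ≤ A⁻¹ := inv_anti₀ hA hAB
  nlinarith [mul_pos (sub_pos.2 ht) hB']

theorem log_one_sub_div_one_sub_lt {x y : ℝ} (hy : 0 < y) (hyx : y < x) (hx : x < 1) :
    0 < log ((1 - y) / (1 - x)) ∧ log ((1 - y) / (1 - x)) < x / (1 - x) := by
  have h1x : 0 < 1 - x := by linarith
  have h1y : 0 < 1 - y := by linarith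
  refine ⟨log_pos ((one_lt_div h1x).2 (by linarith)), ?_⟩
  have hlogx := one_sub_inv_le_log_of_pos h1x
  have : 1 - (1 - x)⁻¹ = -(x / (1 - x)) := by field_simp; ring
  rw [log_div h1y.ne' h1x.ne']
  linarith [log_neg h1y (by linarith)]

theorem log_mul_div_bounds {A B t : ℝ} (hA : 0 < A) (hB : 1 < B) (ht : 1 < t)
    (h : A - A⁻¹ = t * (B - B⁻¹)) :
    0 < log (t * B / A) ∧ log (t * B / A) < (B ^ 2)⁻¹ / (1 - (B ^ 2)⁻¹) := by
  have hB₀ : 0 < B := by linarith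
  have hB₂ : 1 < B ^ 2 := one_lt_pow₀ hB two_ne_zero
  have hratio : t * B / A = (1 - (A ^ 2)⁻¹) / (1 - (B ^ 2)⁻¹) := by
    rw [div_eq_div_iff hA.ne' (by linarith [inv_lt_one_of_one_lt₀ hB₂])]
    have hA' : A * (A ^ 2)⁻¹ = A⁻¹ := by field_simp
    have hB' : B * (B ^ 2)⁻¹ = B⁻¹ := by field_simp
    linear_combination -h - t * hB' + hA'
  rw [hratio]
  refine log_one_sub_div_one_sub_lt (by positivity) (inv_strictAnti₀ (by positivity) ?_)
    (inv_lt_one_of_one_lt₀ hB₂)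
  gcongr
  exact lt_of_sub_inv_eq_mul hA hB ht h

theorem div_one_sub_le {x : ℝ} (hx₀ : 0 ≤ x) (hx : x ≤ 1 / 100001) :
    x / (1 - x) ≤ 1.00001 * x := by
  rw [div_le_iff₀ (by linarith)]
  nlinarith

theorem sub_inv_eq_of_lucas_eq {k0 k1 k e c r : ℤ} (hk0 : 0 ≤ k0) (hk1 : 0 < k1)
    (hk : k = k0 * k1 ^ 2) (he : 0 < e) (hc : c = k0 * e ^ 2 + 1) {s w : ℕ → ℤ}
    (hs0 : s 0 = 0) (hs1 : s 1 = 2 * k1)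
    (hsrec : ∀ j, s (j + 2) = (4 * k + 2) * s (j + 1) - s j) (hw0 : w 0 = 0)
    (hw1 : w 1 = 2 * e * r) (hwrec : ∀ j, w (j + 2) = (4 * c - 2) * w (j + 1) - w j)
    {m n : ℕ} (hmn : s m = w n) :
    pellUnit k ^ m - (pellUnit k ^ m)⁻¹ =
      r * √(k + 1) / √c * (pellUnit (c - 1) ^ n - (pellUnit (c - 1) ^ n)⁻¹) := by
  have hkR : (k : ℝ) = k0 * k1 ^ 2 := by exact_mod_cast hk
  have hcR : (c : ℝ) - 1 = k0 * e ^ 2 := by rw [hc]; push_cast; ring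
  have hS := pell_closed_form (k0 := k0) (e := k1) (u := fun j => (s j : ℝ)) (v := 1)
    (by positivity) (by exact_mod_cast hk1) (by simp [hs0]) (by simp [hs1])
    (fun j => by push_cast [hsrec, hk]; ring) m
  have hW := pell_closed_form (k0 := k0) (e := e) (u := fun j => (w j : ℝ)) (v := r)
    (by positivity) (by exact_mod_cast he) (by simp [hw0]) (by simp [hw1])
    (fun j => by push_cast [hwrec, hc]; ring) n
  rw [← hkR, one_mul] at hS
  rw [← hcR, sub_add_cancel] at hW
  have hmnR : (s m : ℝ) = w n := by exact_mod_cast hmn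
  have hc₀ : (0 : ℝ) < c := by rw [hc]; positivity
  rw [div_mul_eq_mul_div, eq_div_iff (by positivity)]
  linear_combination (-√c) * hS + √(k + 1) * hW + 2 * √k0 * √(k + 1) * √c * hmnR

theorem stmt_12_general (k0 k1 k : ℤ) (hk0 : 0 < k0) (hk1 : 0 < k1)
    (hk : k = k0 * k1 ^ 2) (hk3 : 3 ≤ k)
    (s : ℕ → ℤ) (hs0 : s 0 = 0) (hs1 : s 1 = 2 * k1)
    (hsrec : ∀ ν, s (ν + 2) = (4 * k + 2) * s (ν + 1) - s ν)
    (ν : ℕ) (hν : 1 ≤ ν) (c r : ℤ)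
    (hc : c = k0 * (s ν) ^ 2 + 1) (hr : 0 < r) (hcr : c - k = r ^ 2)
    (w : ℕ → ℤ) (hw0 : w 0 = 0) (hw1 : w 1 = 2 * s ν * r)
    (hwrec : ∀ n, w (n + 2) = (4 * c - 2) * w (n + 1) - w n)
    (m n : ℕ) (hmn : s m = w n) (hn : 2 ≤ n)
    (P Q α1 α2 α3 Λ : ℝ)
    (hα1 : α1 = 2 * (c : ℝ) - 1 + 2 * Real.sqrt ((c : ℝ) ^ 2 - (c : ℝ)))
    (hα2 : α2 = 2 * (k : ℝ) + 1 + 2 * Real.sqrt ((k : ℝ) ^ 2 + (k : ℝ)))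
    (hα3 : α3 = Real.sqrt (((c : ℝ) - (k : ℝ)) * ((k : ℝ) + 1) / (c : ℝ)))
    (hP : P = α2 ^ m / Real.sqrt ((k : ℝ) + 1))
    (hQ : Q = Real.sqrt (((c : ℝ) - (k : ℝ)) / (c : ℝ)) * α1 ^ n)
    (hΛ : Λ = n * Real.log α1 - m * Real.log α2 + Real.log α3) :
    P < Q ∧ Real.log (Q / P) = Λ ∧ 0 < Λ ∧
      Λ < 1.00001 * α1 ^ (-(2 * (n : ℤ))) := by
  have hsν : 2 * k1 ≤ s ν := hs1 ▸ monotone_of_recurrence (by omega) hs0 (by omega) hsrec hν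
  have hck : 4 * (k : ℝ) + 1 ≤ c := by
    exact_mod_cast (by nlinarith [pow_le_pow_left₀ (by positivity) hsν 2] : 4 * k + 1 ≤ c)
  have hk3' : (3 : ℝ) ≤ k := by exact_mod_cast hk3
  have hcr' : (c : ℝ) - k = r ^ 2 := by exact_mod_cast hcr
  have hr' : (0 : ℝ) ≤ r := by exact_mod_cast hr.le
  have hc₀ : (0 : ℝ) < c := by linarith
  have hα1' : α1 = pellUnit (c - 1) := by rw [hα1, pellUnit]; ring_nf
  have hα2' : α2 = pellUnit k := by rw [hα2, pellUnit]
  have hα3' : α3 = r * √(k + 1) / √c := by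
    rw [hα3, hcr', sqrt_div' _ hc₀.le, sqrt_mul' _ (by linarith), sqrt_sq hr']
  have hkey := sub_inv_eq_of_lucas_eq hk0.le hk1 hk (by omega) hc hs0 hs1 hsrec hw0 hw1 hwrec hmn
  rw [← hα1', ← hα2', ← hα3'] at hkey
  have hα3_gt : 1 < α3 := by
    rw [hα3, lt_sqrt zero_le_one, one_pow, lt_div_iff₀ hc₀]; nlinarith
  have hα1_ge : 49 ≤ α1 := by
    linarith [hα1' ▸ four_mul_add_one_le_pellUnit (a := c - 1) (by linarith)]
  have hα2_pos : 0 < α2 := hα2' ▸ pellUnit_pos (by linarith)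
  set A := α2 ^ m
  set B := α1 ^ n
  have hB : 49 ^ 2 ≤ B :=
    (pow_le_pow_left₀ (by norm_num) hα1_ge 2).trans (pow_le_pow_right₀ (by linarith) hn)
  have hQP : Q / P = α3 * B / A := by
    rw [hQ, hP, hα3', hcr', sqrt_div' _ hc₀.le, sqrt_sq hr']
    field_simp
  have hlog : log (Q / P) = Λ := by
    rw [hQP, hΛ, log_div (by positivity) (by positivity), log_mul (by positivity) (by positivity),
      log_pow, log_pow]
    ring
  obtain ⟨hpos, hlt⟩ := log_mul_div_bounds (by positivity) (by linarith) hα3_gt hkey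
  rw [← hQP] at hpos hlt
  refine ⟨?_, hlog, hlog ▸ hpos, ?_⟩
  · have hP₀ : 0 < P := by rw [hP]; positivity
    exact (one_lt_div hP₀).1 ((log_pos_iff (hQP ▸ by positivity)).1 hpos)
  · have hzpow : α1 ^ (-(2 * (n : ℤ))) = (B ^ 2)⁻¹ := by rw [zpow_neg]; norm_cast; ring
    rw [hzpow, ← hlog]
    refine hlt.trans_le (div_one_sub_le (by positivity) ?_)
    rw [one_div]
    exact inv_anti₀ (by norm_num) (by nlinarith)

theorem stmt_12 (k0 k1 k : ℤ) (hk0 : 0 < k0) (hk1 : 0 < k1)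
    (hk0sf : Squarefree k0) (hk : k = k0 * k1 ^ 2) (hk3 : 3 ≤ k)
    (s : ℕ → ℤ) (hs0 : s 0 = 0) (hs1 : s 1 = 2 * k1)
    (hsrec : ∀ ν, s (ν + 2) = (4 * k + 2) * s (ν + 1) - s ν)
    (ν : ℕ) (hν : 1 ≤ ν) (c r : ℤ)
    (hc : c = k0 * (s ν) ^ 2 + 1) (hr : 0 < r) (hcr : c - k = r ^ 2)
    (w : ℕ → ℤ) (hw0 : w 0 = 0) (hw1 : w 1 = 2 * s ν * r)
    (hwrec : ∀ n, w (n + 2) = (4 * c - 2) * w (n + 1) - w n)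
    (m n : ℕ) (hmn : s m = w n) (hn : 2 ≤ n) (hm : n < m)
    (P Q α1 α2 α3 Λ : ℝ)
    (hα1 : α1 = 2 * (c : ℝ) - 1 + 2 * Real.sqrt ((c : ℝ) ^ 2 - (c : ℝ)))
    (hα2 : α2 = 2 * (k : ℝ) + 1 + 2 * Real.sqrt ((k : ℝ) ^ 2 + (k : ℝ)))
    (hα3 : α3 = Real.sqrt (((c : ℝ) - (k : ℝ)) * ((k : ℝ) + 1) / (c : ℝ)))
    (hP : P = α2 ^ m / Real.sqrt ((k : ℝ) + 1))
    (hQ : Q = Real.sqrt (((c : ℝ) - (k : ℝ)) / (c : ℝ)) * α1 ^ n)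
    (hΛ : Λ = n * Real.log α1 - m * Real.log α2 + Real.log α3) :
    P < Q ∧ Real.log (Q / P) = Λ ∧ 0 < Λ ∧
      Λ < 1.00001 * α1 ^ (-(2 * (n : ℤ))) :=
  stmt_12_general k0 k1 k hk0 hk1 hk hk3 s hs0 hs1 hsrec ν hν c r hc hr hcr w hw0 hw1 hwrec m n hmn
    hn P Q α1 α2 α3 Λ hα1 hα2 hα3 hP hQ hΛ
end

section
/- Let k be a nonnegative integer. Then 64k^3 + 64k^2 + 15k + 1 is a perfect square if and only if k = 0 or k = 1. -/
/-!
The number factors as `(8k + 1)(8k² + 7k + 1)` with coprime factors, so `8k + 1 = a²` and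
`8k² + 7k + 1 = b²`. Then `X = 16k + 7` solves `X² - 32b² = 17`, and descending by the unit
`17 + 12√2` shows `X = 10s² + 8st + 5` with `s² + 1 = 2t²`. Comparing with `X = 2a² + 5` gives
`s(5s + 4t) = a²` with coprime factors, so `s = e²` and `e⁴ + 1 = 2t²`, i.e.
`t⁴ - e⁴ = (t² - 1)²`. Fermat's right-triangle theorem (no `x⁴ - y⁴ = z²` with `yz ≠ 0`,
proved by descent through the parametrisation of primitive Pythagorean triples) forces `e² = 1`,
hence `st = ±1` and `k ∈ {0, 1}`.
-/

theorem Int.exists_eq_sq_of_isCoprime_of_pos {a b c : ℤ} (hab : IsCoprime a b)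
    (heq : a * b = c ^ 2) (ha : 0 < a) : ∃ r, a = r ^ 2 := by
  obtain ⟨r, hr | hr⟩ := Int.sq_of_isCoprime hab heq
  · exact ⟨r, hr⟩
  · nlinarith [sq_nonneg r]

def FermatRightTriangle (x y z : ℤ) : Prop :=
  y ≠ 0 ∧ z ≠ 0 ∧ x ^ 4 - y ^ 4 = z ^ 2

namespace FermatRightTriangle

variable {x y z : ℤ}

theorem ne_zero (h : FermatRightTriangle x y z) : x ≠ 0 := by
  rintro rfl
  obtain ⟨-, hz, h⟩ := h
  have : 0 < z ^ 2 := by positivity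
  have : 0 ≤ y ^ 4 := by positivity
  linarith

theorem exists_smaller_of_gcd_ne_one (h : FermatRightTriangle x y z) (hxy : x.gcd y ≠ 1) :
    ∃ x' y' z', FermatRightTriangle x' y' z' ∧ x'.natAbs < x.natAbs := by
  have hx := h.ne_zero
  obtain ⟨hy, hz, h⟩ := h
  obtain ⟨g, hg, ⟨x', rfl⟩, ⟨y', rfl⟩⟩ : ∃ g : ℤ, 1 < g ∧ g ∣ x ∧ g ∣ y :=
    ⟨x.gcd y, by have := Int.gcd_pos_of_ne_zero_right x hy; omega,
      Int.gcd_dvd_left .., Int.gcd_dvd_right ..⟩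
  obtain ⟨z', rfl⟩ : g ^ 2 ∣ z := by
    rw [← Int.pow_dvd_pow_iff two_ne_zero]
    exact ⟨x' ^ 4 - y' ^ 4, by linear_combination -h⟩
  refine ⟨x', y', z', ⟨right_ne_zero_of_mul hy, right_ne_zero_of_mul hz, ?_⟩, ?_⟩
  · have : g ^ 4 ≠ 0 := by positivity
    exact mul_left_cancel₀ this (by linear_combination h)
  · rw [Int.natAbs_mul]
    have := Int.natAbs_pos.2 (right_ne_zero_of_mul hx)
    have : 1 < g.natAbs := by omega
    nlinarith

theorem isCoprime_sq (h : FermatRightTriangle x y z) (hxy : IsCoprime x y) :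
    IsCoprime (y ^ 2) z := by
  have : IsCoprime (z ^ 2 + 1 * (y ^ 2) ^ 2) ((y ^ 2) ^ 2) := by
    rw [show z ^ 2 + 1 * (y ^ 2) ^ 2 = x ^ 4 by linear_combination -h.2.2, ← pow_mul]
    exact hxy.pow
  exact ((IsCoprime.pow_iff two_pos two_pos).1 this.of_add_mul_right_left).symm

theorem pythagoreanTriple (h : FermatRightTriangle x y z) :
    PythagoreanTriple (y ^ 2) z (x ^ 2) := by
  unfold PythagoreanTriple
  linear_combination -h.2.2

theorem exists_smaller_of_odd (h : FermatRightTriangle x y z) (hxy : IsCoprime x y)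
    (hy : Odd y) : ∃ x' y' z', FermatRightTriangle x' y' z' ∧ x'.natAbs < x.natAbs := by
  have hx := h.ne_zero
  obtain ⟨m, n, hy2, hz, hx2, -⟩ := h.pythagoreanTriple.coprime_classification'
    (Int.isCoprime_iff_gcd_eq_one.1 (h.isCoprime_sq hxy)) (Int.odd_iff.1 hy.pow)
    (by positivity)
  have hn : n ≠ 0 := by rintro rfl; exact h.2.1 (by simpa using hz)
  refine ⟨m, n, x * y, ⟨hn, mul_ne_zero hx h.1, ?_⟩, ?_⟩
  · linear_combination -x ^ 2 * hy2 - (m ^ 2 - n ^ 2) * hx2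
  · rw [Int.natAbs_lt_iff_sq_lt, hx2]
    linarith [sq_pos_of_ne_zero hn]

theorem exists_smaller_of_pow_four_add_four_mul_pow_four {c d : ℤ} (hcd : IsCoprime c d)
    (hc : c ≠ 0) (hd : Odd d) (h : d ^ 4 + 4 * c ^ 4 = x ^ 2) :
    ∃ x' y' z', FermatRightTriangle x' y' z' ∧ x'.natAbs < x.natAbs := by
  wlog hx : 0 < x generalizing x
  · have hx0 : x ≠ 0 := by
      rintro rfl
      nlinarith [pow_pos (sq_pos_of_ne_zero hc) 2, sq_nonneg (d ^ 2)]
    simpa using @this (-x) (by linear_combination h) (by omega)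
  have hcop : IsCoprime (d ^ 2) (2 * c ^ 2) := by
    obtain ⟨j, rfl⟩ := hd
    exact (IsCoprime.mul_right ⟨1, -(2 * j ^ 2 + 2 * j), by ring⟩ hcd.symm.pow)
  obtain ⟨p, q, hd2, hc2, rfl, hpq, -, hp⟩ := PythagoreanTriple.coprime_classification'
    (x := d ^ 2) (y := 2 * c ^ 2) (z := x) (by unfold PythagoreanTriple; linear_combination h)
    (Int.isCoprime_iff_gcd_eq_one.1 hcop) (Int.odd_iff.1 hd.pow) hx
  have hpq' : p * q = c ^ 2 := by linarith
  have hpq0 : 0 < p * q := hpq' ▸ sq_pos_of_ne_zero hc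
  have hp : 0 < p := lt_of_le_of_ne hp (by rintro rfl; simp at hpq0)
  have hq : 0 < q := pos_of_mul_pos_right hpq0 hp.le
  have hpq := Int.isCoprime_iff_gcd_eq_one.2 hpq
  obtain ⟨u, rfl⟩ := Int.exists_eq_sq_of_isCoprime_of_pos hpq hpq' hp
  obtain ⟨v, rfl⟩ := Int.exists_eq_sq_of_isCoprime_of_pos hpq.symm (c := c)
    (by linear_combination hpq') hq
  refine ⟨u, v, d, ⟨?_, ?_, by linear_combination -hd2⟩, ?_⟩
  · rintro rfl; simp at hq
  · rintro rfl; simp at hd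
  · rw [Int.natAbs_lt_iff_sq_lt]
    nlinarith [sq_pos_of_ne_zero hc, pow_pos hq 2]

theorem exists_smaller_of_two_mul_mul_eq_sq {m n : ℤ} (hmn : IsCoprime m n) (hm : Even m)
    (hn : Odd n) (hm0 : 0 < m) (hn0 : 0 < n) (hy : 2 * m * n = y ^ 2)
    (hx : m ^ 2 + n ^ 2 = x ^ 2) :
    ∃ x' y' z', FermatRightTriangle x' y' z' ∧ x'.natAbs < x.natAbs := by
  obtain ⟨m, rfl⟩ := hm
  obtain ⟨y, rfl⟩ : Even y :=
    (Int.even_pow' two_ne_zero).1 ⟨2 * m * n, by linear_combination -hy⟩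
  have hmn' : IsCoprime m n := by
    rw [← two_mul] at hmn
    exact hmn.of_mul_left_right
  obtain ⟨c, rfl⟩ := Int.exists_eq_sq_of_isCoprime_of_pos hmn' (c := y) (by linarith) (by omega)
  obtain ⟨d, rfl⟩ := Int.exists_eq_sq_of_isCoprime_of_pos hmn'.symm (c := y) (by linarith) hn0
  exact exists_smaller_of_pow_four_add_four_mul_pow_four
    ((IsCoprime.pow_iff two_pos two_pos).1 hmn') (by rintro rfl; simp at hm0)
    (Int.odd_pow.1 hn |>.resolve_right two_ne_zero) (by linear_combination hx)

theorem exists_smaller_of_even (h : FermatRightTriangle x y z) (hxy : IsCoprime x y)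
    (hy : Even y) : ∃ x' y' z', FermatRightTriangle x' y' z' ∧ x'.natAbs < x.natAbs := by
  have hx := h.ne_zero
  have hcop := h.isCoprime_sq hxy
  have hz : Odd z := by
    rw [← Int.not_even_iff_odd]
    intro hz
    have := hcop.isUnit_of_dvd' (even_iff_two_dvd.1 (hy.pow_of_ne_zero two_ne_zero))
      (even_iff_two_dvd.1 hz)
    norm_num [Int.isUnit_iff] at this
  obtain ⟨m, n, -, hy2, hx2, hmn, hpar, hm⟩ :=
    (pythagoreanTriple_comm.1 h.pythagoreanTriple).coprime_classification'
      (Int.isCoprime_iff_gcd_eq_one.1 hcop.symm) (Int.odd_iff.1 hz) (by positivity)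
  have hmn0 : 0 < m * n := by nlinarith [sq_pos_of_ne_zero h.1]
  have hm0 : 0 < m := lt_of_le_of_ne hm (by rintro rfl; simp at hmn0)
  have hn0 : 0 < n := pos_of_mul_pos_right hmn0 hm0.le
  have hmn := Int.isCoprime_iff_gcd_eq_one.2 hmn
  rcases hpar with ⟨hm2, hn2⟩ | ⟨hm2, hn2⟩
  · exact exists_smaller_of_two_mul_mul_eq_sq hmn (Int.even_iff.2 hm2) (Int.odd_iff.2 hn2)
      hm0 hn0 hy2.symm hx2.symm
  · exact exists_smaller_of_two_mul_mul_eq_sq (x := x) (y := y) hmn.symm (Int.even_iff.2 hn2)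
      (Int.odd_iff.2 hm2) hn0 hm0 (by linear_combination -hy2) (by linear_combination -hx2)

theorem exists_smaller (h : FermatRightTriangle x y z) :
    ∃ x' y' z', FermatRightTriangle x' y' z' ∧ x'.natAbs < x.natAbs := by
  by_cases hxy : x.gcd y = 1
  · have hxy := Int.isCoprime_iff_gcd_eq_one.2 hxy
    rcases y.even_or_odd with hy | hy
    exacts [h.exists_smaller_of_even hxy hy, h.exists_smaller_of_odd hxy hy]
  · exact h.exists_smaller_of_gcd_ne_one hxy

end FermatRightTriangle

theorem not_fermatRightTriangle (x y z : ℤ) : ¬FermatRightTriangle x y z := by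
  induction hn : x.natAbs using Nat.strong_induction_on generalizing x y z with
  | _ n ih =>
    intro h
    obtain ⟨x', y', z', h', hlt⟩ := h.exists_smaller
    exact ih _ (hn ▸ hlt) x' y' z' rfl h'

theorem Int.sq_eq_one_of_pow_four_add_one_eq_two_mul_sq {e t : ℤ}
    (h : e ^ 4 + 1 = 2 * t ^ 2) : e ^ 2 = 1 := by
  have he : e ≠ 0 := by rintro rfl; omega
  by_contra hne
  refine not_fermatRightTriangle t e (t ^ 2 - 1) ⟨he, fun ht ↦ hne ?_, by linear_combination -h⟩
  nlinarith [sq_nonneg e]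

theorem Int.sq_eq_one_of_mul_eq_sq_of_sq_add_one_eq_two_mul_sq {s t a : ℤ}
    (hst : s ^ 2 + 1 = 2 * t ^ 2) (h : s * (5 * s + 4 * t) = a ^ 2) : s ^ 2 = 1 := by
  wlog hs : 0 < s generalizing s t
  · have hs0 : s ≠ 0 := by rintro rfl; omega
    simpa using @this (-s) (-t) (by linear_combination hst) (by linear_combination h) (by omega)
  have hcop : IsCoprime s (5 * s + 4 * t) := by
    obtain ⟨j, hj⟩ : Odd s :=
      (Int.odd_pow' two_ne_zero).1 ⟨t ^ 2 - 1, by linear_combination hst⟩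
    have h2 : IsCoprime s 2 := ⟨1, -j, by linear_combination hj⟩
    have ht : IsCoprime s t := ⟨-s, 2 * t, by linear_combination -hst⟩
    simpa [add_comm, mul_comm, mul_assoc] using
      ((h2.mul_right h2).mul_right ht).add_mul_left_right 5
  obtain ⟨e, rfl⟩ := Int.exists_eq_sq_of_isCoprime_of_pos hcop h hs
  rw [Int.sq_eq_one_of_pow_four_add_one_eq_two_mul_sq (e := e) (t := t)
    (by linear_combination hst), one_pow]

theorem descent_of_sq_eq_32_mul_sq_add_17 {X Y : ℤ} (hX : 0 ≤ X) (hY : 3 ≤ Y)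
    (h : X ^ 2 = 32 * Y ^ 2 + 17) : 0 ≤ 17 * X - 96 * Y ∧ (17 * Y - 3 * X) ^ 2 < Y ^ 2 := by
  have h₁ : 16 * Y < 3 * X := by nlinarith
  have h₂ : 3 * X < 18 * Y := by nlinarith
  constructor <;> nlinarith

-- `X` is the rational part of `(5 + 2√2)(s + t√2)²`, and `X + 4Y√2` is that number or its
-- conjugate; multiplying by `17 + 12√2 = (3 + 2√2)²` replaces `s + t√2` by `(3 ± 2√2)(s + t√2)`.
theorem exists_param_unit_mul {s t X Y : ℤ} (hst : s ^ 2 + 1 = 2 * t ^ 2)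
    (hX : X = 10 * s ^ 2 + 8 * s * t + 5) (h : X ^ 2 = 32 * Y ^ 2 + 17) :
    ∃ s' t', s' ^ 2 + 1 = 2 * t' ^ 2 ∧ 17 * X + 96 * Y = 10 * s' ^ 2 + 8 * s' * t' + 5 := by
  have hY : (2 * s ^ 2 + 5 * s * t + 1 - 2 * Y) * (2 * s ^ 2 + 5 * s * t + 1 + 2 * Y) = 0 := by
    have : 8 * ((2 * s ^ 2 + 5 * s * t + 1 - 2 * Y) * (2 * s ^ 2 + 5 * s * t + 1 + 2 * Y)) = 0 :=
      by linear_combination h - (X + 10 * s ^ 2 + 8 * s * t + 5) * hX - 68 * s ^ 2 * hst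
    simpa using this
  rcases mul_eq_zero.1 hY with hY | hY
  · exact ⟨3 * s + 4 * t, 2 * s + 3 * t, by linear_combination hst,
      by linear_combination 17 * hX - 48 * hY + 128 * hst⟩
  · exact ⟨3 * s - 4 * t, 3 * t - 2 * s, by linear_combination hst,
      by linear_combination 17 * hX + 48 * hY + 32 * hst⟩

theorem exists_param_of_sq_eq_32_mul_sq_add_17 {X Y : ℤ} (hX : 0 ≤ X)
    (h : X ^ 2 = 32 * Y ^ 2 + 17) :
    ∃ s t : ℤ, s ^ 2 + 1 = 2 * t ^ 2 ∧ X = 10 * s ^ 2 + 8 * s * t + 5 := by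
  induction hn : Y.natAbs using Nat.strong_induction_on generalizing X Y with
  | _ n ih =>
  wlog hY : 0 ≤ Y generalizing Y
  · exact @this (-Y) (by linear_combination h) (by simpa using hn) (by omega)
  obtain hY3 | hY3 := lt_or_ge Y 3
  · interval_cases Y
    · nlinarith [show 4 < X by nlinarith]
    · obtain rfl : X = 7 := by nlinarith
      exact ⟨1, -1, by norm_num, by norm_num⟩
    · nlinarith [show 12 < X by nlinarith]
  · obtain ⟨hX', hY'⟩ := descent_of_sq_eq_32_mul_sq_add_17 hX hY3 h
    have h' : (17 * X - 96 * Y) ^ 2 = 32 * (17 * Y - 3 * X) ^ 2 + 17 := by linear_combination h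
    obtain ⟨s, t, hst, hs⟩ := ih _ (hn ▸ Int.natAbs_lt_iff_sq_lt.2 hY') hX' h' rfl
    obtain ⟨s', t', hst', hs'⟩ := exists_param_unit_mul hst hs h'
    exact ⟨s', t', hst', by linear_combination hs'⟩

theorem stmt_15 (k : ℕ) :
    IsSquare (64 * k ^ 3 + 64 * k ^ 2 + 15 * k + 1) ↔ k = 0 ∨ k = 1 := by
  refine ⟨fun ⟨m, hm⟩ ↦ ?_, by rintro (rfl | rfl); exacts [⟨1, rfl⟩, ⟨12, rfl⟩]⟩
  have hfactor : (8 * (k : ℤ) + 1) * (8 * k ^ 2 + 7 * k + 1) = (m : ℤ) ^ 2 := by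
    have : (64 * k ^ 3 + 64 * k ^ 2 + 15 * k + 1 : ℤ) = m * m := by exact_mod_cast hm
    linear_combination this
  have hcop : IsCoprime (8 * (k : ℤ) + 1) (8 * k ^ 2 + 7 * k + 1) := ⟨-(4 * k + 3), 4, by ring⟩
  obtain ⟨a, ha⟩ := Int.exists_eq_sq_of_isCoprime_of_pos hcop hfactor (by positivity)
  obtain ⟨b, hb⟩ := Int.exists_eq_sq_of_isCoprime_of_pos hcop.symm (c := m)
    (by linear_combination hfactor) (by positivity)
  obtain ⟨s, t, hst, hX⟩ := exists_param_of_sq_eq_32_mul_sq_add_17 (X := 16 * k + 7) (Y := b)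
    (by positivity) (by linear_combination 32 * hb)
  have hs : s ^ 2 = 1 :=
    Int.sq_eq_one_of_mul_eq_sq_of_sq_add_one_eq_two_mul_sq hst (a := a) (by linarith)
  have hk : 2 * (k : ℤ) = 1 + s * t := by linarith
  have ht : t ^ 2 = 1 := by linarith
  have hst1 : (s * t) ^ 2 = 1 := by linear_combination t ^ 2 * hs + ht
  rcases sq_eq_one_iff.1 hst1 with h | h <;> rw [h] at hk <;> omega
end
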